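/- arXiv:1807.01184 — 4 statements merged into one kernel-verified Lean document; each statement's English description precedes it below -/
import Mathlib

section
/- Let $1\le p<u<\infty$. Then $\mathcal{X}_{u,p}(\mathbb{Z}^d)$ is a pre-dual of $m_{u,p}(\mathbb{Z}^d)$: the topological dual of $\mathcal{X}_{u,p}(\mathbb{Z}^d)$ is isometrically isomorphic to $m_{u,p}(\mathbb{Z}^d)$. Concretely, (a) for every $\mu\in m_{u,p}$ and $\lambda\in\mathcal{X}_{u,p}$ the pairing satisfies $|\sum_{k\in\mathbb{Z}^d}\lambda_k\mu_k|\le \|\mu\,|\,m_{u,p}\|\,\|\lambda\,|\,\mathcal{X}_{u,p}\|$, so each $\mu\in m_{u,p}$ induces a bounded linear functional on $\mathcal{X}_{u,p}$ of norm at most $\|\mu\,|\,m_{u,p}\|$; and (b) conversely, for every bounded linear functional $f$ on $\mathcal{X}_{u,p}(\mathbb{Z}^d)$ the sequence $\{f(e^{(k)})\}_{k\in\mathbb{Z}^d}$ belongs to $m_{u,p}(\mathbb{Z}^d)$ with $\|\{f(e^{(k)})\}_k\,|\,m_{u,p}\|\le\|f\|$, where $e^{(k)}$ is the $k$-th standard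 unit sequence. -/
open scoped ENNReal NNReal BigOperators
open Filter

/-- The unit cube `Q_{0,k}` is contained in the dyadic cube `Q_{-j,m}` of side length `2^j`. -/
def inDyadic (d j : ℕ) (m k : Fin d → ℤ) : Prop :=
  ∀ i, 2 ^ j * m i ≤ k i ∧ k i < 2 ^ j * (m i + 1)

/-- The Morrey sequence space quasi-norm `‖λ | m_{u,p}(ℤ^d)‖`, with values in `ℝ≥0∞`. -/
noncomputable def morreyNorm (d : ℕ) (u p : ℝ) (lam : (Fin d → ℤ) → ℂ) : ℝ≥0∞ :=
  ⨆ (j : ℕ) (m : Fin d → ℤ),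
    ((2 : ℝ≥0∞) ^ (j * d)) ^ (1 / u - 1 / p) *
      (∑' k : {k : Fin d → ℤ // inDyadic d j m k}, (‖lam k.1‖₊ : ℝ≥0∞) ^ p) ^ (1 / p)

/-- The `ℓ_r(ℤ^d)` norm. -/
noncomputable def lpNorm (d : ℕ) (r : ℝ) (lam : (Fin d → ℤ) → ℂ) : ℝ≥0∞ :=
  (∑' k : Fin d → ℤ, (‖lam k‖₊ : ℝ≥0∞) ^ r) ^ (1 / r)

/-- The `ℓ_∞(ℤ^d)` norm. -/
noncomputable def lInftyNorm (d : ℕ) (lam : (Fin d → ℤ) → ℂ) : ℝ≥0∞ :=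
  ⨆ k : Fin d → ℤ, (‖lam k‖₊ : ℝ≥0∞)

/-- The weak Lorentz `ℓ_{u,∞}(ℤ^d)` norm, via the distribution function. -/
noncomputable def weakNorm (d : ℕ) (u : ℝ) (lam : (Fin d → ℤ) → ℂ) : ℝ≥0∞ :=
  ⨆ t : ℝ≥0, (t : ℝ≥0∞) *
    (∑' _ : {k : Fin d → ℤ // (t : ℝ) < ‖lam k‖}, (1 : ℝ≥0∞)) ^ (1 / u)

/-- The norm of the level-`j` space `X^{(j)}_{u,p}(ℤ^d)`. -/
noncomputable def XjNorm (d : ℕ) (u p p' : ℝ) (j : ℕ) (lam : (Fin d → ℤ) → ℂ) : ℝ≥0∞ :=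
  ((2 : ℝ≥0∞) ^ (j * d)) ^ (1 / p - 1 / u) *
    ∑' m : Fin d → ℤ,
      (∑' k : {k : Fin d → ℤ // inDyadic d j m k}, (‖lam k.1‖₊ : ℝ≥0∞) ^ p') ^ (1 / p')

/-- The norm of `X_{u,p}(ℤ^d)`: infimum over decompositions `λ = ∑_j λ^{(j)}`. -/
noncomputable def XupNorm (d : ℕ) (u p p' : ℝ) (lam : (Fin d → ℤ) → ℂ) : ℝ≥0∞ :=
  ⨅ (L : ℕ → (Fin d → ℤ) → ℂ) (_ : ∀ k, HasSum (fun j => L j k) (lam k)),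
    ∑' j : ℕ, XjNorm d u p p' j (L j)

/-- Membership in `m_{u,p}(ℤ^d)`. -/
def MemMorrey (d : ℕ) (u p : ℝ) (lam : (Fin d → ℤ) → ℂ) : Prop :=
  morreyNorm d u p lam ≠ ⊤

/-- Membership in `m^{00}_{u,p}(ℤ^d)`, the closure of the finitely supported sequences. -/
def MemMorrey00 (d : ℕ) (u p : ℝ) (lam : (Fin d → ℤ) → ℂ) : Prop :=
  MemMorrey d u p lam ∧
    ∀ ε : ℝ≥0∞, 0 < ε → ∃ mu : (Fin d → ℤ) → ℂ,
      (Function.support mu).Finite ∧ morreyNorm d u p (lam - mu) < ε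

/-- `Q_{-ν,m} ⊆ Q_{-j,0}` for dyadic cubes. -/
def subCube (d j ν : ℕ) (m : Fin d → ℤ) : Prop :=
  ν ≤ j ∧ ∀ i, 0 ≤ m i ∧ 2 ^ ν * (m i + 1) ≤ 2 ^ j

/-- Norm of the finite-dimensional Morrey space `m^{2^{jd}}_{u,p}` on the cube `Q_{-j,0}`. -/
noncomputable def finMorreyNorm (d : ℕ) (u p : ℝ) (j : ℕ) (lam : (Fin d → ℤ) → ℂ) : ℝ≥0∞ :=
  ⨆ (ν : ℕ) (m : Fin d → ℤ) (_ : subCube d j ν m),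
    ((2 : ℝ≥0∞) ^ (ν * d)) ^ (1 / u - 1 / p) *
      (∑' k : {k : Fin d → ℤ // inDyadic d ν m k}, (‖lam k.1‖₊ : ℝ≥0∞) ^ p) ^ (1 / p)

/-- Operator norm of `id_j : m^{2^{jd}}_{u₁,p₁} → m^{2^{jd}}_{u₂,p₂}`. -/
noncomputable def morreyOpNorm (d : ℕ) (u₁ p₁ u₂ p₂ : ℝ) (j : ℕ) : ℝ≥0∞ :=
  ⨆ (lam : (Fin d → ℤ) → ℂ) (_ : finMorreyNorm d u₁ p₁ j lam ≤ 1),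
    finMorreyNorm d u₂ p₂ j lam


/-!
(a) On a dyadic cube `Q = Q_{-j,m}`, Hölder's inequality and the Morrey condition give
`∑_{k ∈ Q} |λ_k μ_k| ≤ ‖λ|_Q‖_{p'} ‖μ|_Q‖_p ≤ 2^{jd(1/p-1/u)} ‖λ|_Q‖_{p'} ‖μ | m_{u,p}‖`.
Summing over the cubes of level `j` bounds the pairing by `‖λ‖^{(j)}_{u,p} ‖μ | m_{u,p}‖`;
summing over the levels of a decomposition `λ = ∑_j λ^{(j)}` and taking the infimum gives (a).

(b) Put `μ_k = f(e^{(k)})`. By linearity on finitely supported sequences, `f` maps the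
Hölder-extremal sequence `λ_k = conj μ_k |μ_k|^{p-2}` on `Q` to `A = ∑_{k ∈ Q} |μ_k|^p`,
while `λ`, a single-level sequence, has norm at most `2^{jd(1/p-1/u)} A^{1/p'}`.
So `A ≤ ‖f‖ 2^{jd(1/p-1/u)} A^{1/p'}`, i.e. `2^{jd(1/u-1/p)} A^{1/p} ≤ ‖f‖`.
-/
open scoped ComplexConjugate

section DyadicCubes

variable {d : ℕ}

theorem inDyadic_iff_ediv_eq {j : ℕ} {m k : Fin d → ℤ} :
    inDyadic d j m k ↔ (fun i => k i / 2 ^ j) = m := by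
  have h2j : (0 : ℤ) < 2 ^ j := by positivity
  simp only [inDyadic, funext_iff, Int.ediv_eq_iff_of_pos h2j]
  refine forall_congr' fun i => and_congr ?_ ?_ <;> constructor <;> intro h <;> linarith

noncomputable def dyadicCube (d j : ℕ) (m : Fin d → ℤ) : Finset (Fin d → ℤ) :=
  Fintype.piFinset fun i => Finset.Ico (2 ^ j * m i) (2 ^ j * (m i + 1))

theorem mem_dyadicCube {j : ℕ} {m k : Fin d → ℤ} : k ∈ dyadicCube d j m ↔ inDyadic d j m k := by
  simp [dyadicCube, inDyadic]

theorem dyadicCube_zero (m : Fin d → ℤ) : dyadicCube d 0 m = {m} := by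
  ext k
  simp [mem_dyadicCube, inDyadic_iff_ediv_eq]

theorem tsum_inDyadic {α : Type*} [AddCommMonoid α] [TopologicalSpace α] (j : ℕ)
    (m : Fin d → ℤ) (g : (Fin d → ℤ) → α) :
    ∑' k : {k // inDyadic d j m k}, g k = ∑ k ∈ dyadicCube d j m, g k := by
  rw [← Finset.tsum_subtype]
  exact ((Equiv.subtypeEquivRight fun _ => mem_dyadicCube).tsum_eq
    fun k : {k // inDyadic d j m k} => g k).symm

theorem tsum_eq_tsum_tsum_inDyadic (j : ℕ) (F : (Fin d → ℤ) → ℝ≥0∞) :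
    ∑' k, F k = ∑' m, ∑' k : {k // inDyadic d j m k}, F k := by
  rw [← ENNReal.tsum_fiberwise F fun k i => k i / 2 ^ j]
  refine tsum_congr fun m => ?_
  let e : {k // inDyadic d j m k} ≃ (fun (k : Fin d → ℤ) i => k i / 2 ^ j) ⁻¹' {m} :=
    Equiv.subtypeEquivRight fun _ => inDyadic_iff_ediv_eq
  exact (e.tsum_eq fun k => F k).symm

theorem inDyadic_unique {j : ℕ} {m m' k : Fin d → ℤ} (h : inDyadic d j m k)
    (h' : inDyadic d j m' k) : m = m' :=
  (inDyadic_iff_ediv_eq.1 h).symm.trans (inDyadic_iff_ediv_eq.1 h')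

end DyadicCubes

theorem two_pow_rpow_mul_rpow_neg (n : ℕ) (x : ℝ) :
    ((2 : ℝ≥0∞) ^ n) ^ x * ((2 : ℝ≥0∞) ^ n) ^ (-x) = 1 := by
  rw [← ENNReal.rpow_add _ _ (by positivity) (by simp), add_neg_cancel, ENNReal.rpow_zero]

section MorreyPairing

variable {d : ℕ} {u p p' : ℝ}

theorem cube_norm_le_morreyNorm (μ : (Fin d → ℤ) → ℂ) (j : ℕ) (m : Fin d → ℤ) :
    (∑' k : {k // inDyadic d j m k}, ‖μ k‖ₑ ^ p) ^ (1 / p)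
      ≤ ((2 : ℝ≥0∞) ^ (j * d)) ^ (1 / p - 1 / u) * morreyNorm d u p μ := by
  set B : ℝ≥0∞ := (2 : ℝ≥0∞) ^ (j * d)
  set S := (∑' k : {k // inDyadic d j m k}, ‖μ k‖ₑ ^ p) ^ (1 / p)
  have hterm : B ^ (1 / u - 1 / p) * S ≤ morreyNorm d u p μ := le_iSup₂_of_le j m le_rfl
  calc S = B ^ (1 / p - 1 / u) * (B ^ (1 / u - 1 / p) * S) := by
        rw [← mul_assoc, show 1 / u - 1 / p = -(1 / p - 1 / u) by ring,
          two_pow_rpow_mul_rpow_neg, one_mul]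
    _ ≤ B ^ (1 / p - 1 / u) * morreyNorm d u p μ := by gcongr

theorem tsum_enorm_mul_le_XjNorm_mul_morreyNorm (hpq : p.HolderConjugate p') (j : ℕ)
    (g μ : (Fin d → ℤ) → ℂ) :
    ∑' k, ‖g k‖ₑ * ‖μ k‖ₑ ≤ XjNorm d u p p' j g * morreyNorm d u p μ := by
  set B : ℝ≥0∞ := (2 : ℝ≥0∞) ^ (j * d)
  have holder : ∀ m, ∑' k : {k // inDyadic d j m k}, ‖g k‖ₑ * ‖μ k‖ₑ ≤
      (∑' k : {k // inDyadic d j m k}, ‖g k‖ₑ ^ p') ^ (1 / p') *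
        (∑' k : {k // inDyadic d j m k}, ‖μ k‖ₑ ^ p) ^ (1 / p) := fun m => by
    rw [tsum_inDyadic j m fun k => ‖g k‖ₑ * ‖μ k‖ₑ, tsum_inDyadic j m fun k => ‖g k‖ₑ ^ p',
      tsum_inDyadic j m fun k => ‖μ k‖ₑ ^ p]
    exact ENNReal.inner_le_Lp_mul_Lq _ _ _ hpq.symm
  calc ∑' k, ‖g k‖ₑ * ‖μ k‖ₑ
      = ∑' m, ∑' k : {k // inDyadic d j m k}, ‖g k‖ₑ * ‖μ k‖ₑ :=
        tsum_eq_tsum_tsum_inDyadic j _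
    _ ≤ ∑' m, (∑' k : {k // inDyadic d j m k}, ‖g k‖ₑ ^ p') ^ (1 / p') *
          (B ^ (1 / p - 1 / u) * morreyNorm d u p μ) :=
        ENNReal.tsum_le_tsum fun m =>
          (holder m).trans (by gcongr; exact cube_norm_le_morreyNorm μ j m)
    _ = XjNorm d u p p' j g * morreyNorm d u p μ := by
        rw [ENNReal.tsum_mul_right, XjNorm]
        simp only [enorm_eq_nnnorm]
        ring

theorem tsum_enorm_mul_le_morreyNorm_mul_tsum_XjNorm (hpq : p.HolderConjugate p')
    {L : ℕ → (Fin d → ℤ) → ℂ} {lam : (Fin d → ℤ) → ℂ} (hL : ∀ k, HasSum (fun j => L j k) (lam k))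
    (μ : (Fin d → ℤ) → ℂ) :
    ∑' k, ‖lam k‖ₑ * ‖μ k‖ₑ ≤ morreyNorm d u p μ * ∑' j, XjNorm d u p p' j (L j) := by
  calc ∑' k, ‖lam k‖ₑ * ‖μ k‖ₑ ≤ ∑' k, (∑' j, ‖L j k‖ₑ) * ‖μ k‖ₑ := by
        gcongr with k
        exact (hL k).tsum_eq ▸ enorm_tsum_le_tsum_enorm
    _ = ∑' j, ∑' k, ‖L j k‖ₑ * ‖μ k‖ₑ := by
        simp_rw [← ENNReal.tsum_mul_right]
        exact ENNReal.tsum_comm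
    _ ≤ ∑' j, XjNorm d u p p' j (L j) * morreyNorm d u p μ :=
        ENNReal.tsum_le_tsum fun j => tsum_enorm_mul_le_XjNorm_mul_morreyNorm hpq j (L j) μ
    _ = morreyNorm d u p μ * ∑' j, XjNorm d u p p' j (L j) := by
        rw [ENNReal.tsum_mul_right, mul_comm]

theorem tsum_enorm_mul_le_morreyNorm_mul_XupNorm (hpq : p.HolderConjugate p')
    {lam μ : (Fin d → ℤ) → ℂ} (hμ : morreyNorm d u p μ ≠ ⊤) (hlam : XupNorm d u p p' lam ≠ ⊤) :
    ∑' k, ‖lam k‖ₑ * ‖μ k‖ₑ ≤ morreyNorm d u p μ * XupNorm d u p p' lam := by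
  rcases eq_or_ne (morreyNorm d u p μ) 0 with hμ₀ | hμ₀
  -- `ENNReal.mul_iInf_of_ne` needs a nonzero factor; for a zero one, any decomposition will do.
  · obtain ⟨L, hL, -⟩ : ∃ L : ℕ → (Fin d → ℤ) → ℂ, ∃ _ : ∀ k, HasSum (fun j => L j k) (lam k),
        ∑' j, XjNorm d u p p' j (L j) < ⊤ := by
      simpa only [XupNorm, iInf_lt_iff] using hlam.lt_top
    have h := tsum_enorm_mul_le_morreyNorm_mul_tsum_XjNorm (u := u) hpq hL μ
    rwa [hμ₀, zero_mul] at h ⊢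
  · rw [XupNorm, ENNReal.mul_iInf_of_ne hμ₀ hμ]
    refine le_iInf fun L => ?_
    rw [ENNReal.mul_iInf_of_ne hμ₀ hμ]
    exact le_iInf fun hL => tsum_enorm_mul_le_morreyNorm_mul_tsum_XjNorm hpq hL μ

end MorreyPairing

section XupNorm

variable {d : ℕ} {u p p' : ℝ}

theorem XjNorm_zero (hp' : 0 < p') (j : ℕ) : XjNorm d u p p' j 0 = 0 := by
  simp [XjNorm, ENNReal.zero_rpow_of_pos hp', hp']

theorem XupNorm_le_XjNorm (hp' : 0 < p') (j : ℕ) (lam : (Fin d → ℤ) → ℂ) :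
    XupNorm d u p p' lam ≤ XjNorm d u p p' j lam := by
  have hL : ∀ k, HasSum (fun i => (if i = j then lam else 0) k) (lam k) := fun k => by
    simpa only [apply_ite (fun g : (Fin d → ℤ) → ℂ => g k), Pi.zero_apply]
      using hasSum_ite_eq j (lam k)
  refine (iInf₂_le _ hL).trans_eq ?_
  rw [tsum_eq_single j fun i hi => by simp only [if_neg hi, XjNorm_zero hp']]
  simp

theorem XjNorm_level_zero (hp' : 0 < p') (lam : (Fin d → ℤ) → ℂ) :
    XjNorm d u p p' 0 lam = ∑' k, ‖lam k‖ₑ := by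
  rw [XjNorm, Nat.zero_mul, pow_zero, ENNReal.one_rpow, one_mul]
  refine tsum_congr fun m => ?_
  rw [tsum_inDyadic 0 m fun k => (‖lam k‖₊ : ℝ≥0∞) ^ p', dyadicCube_zero, Finset.sum_singleton,
    ← ENNReal.rpow_mul, mul_one_div_cancel hp'.ne', ENNReal.rpow_one, enorm_eq_nnnorm]

theorem XupNorm_ne_top_of_finite_support (hp' : 0 < p') {lam : (Fin d → ℤ) → ℂ}
    (h : (Function.support lam).Finite) : XupNorm d u p p' lam ≠ ⊤ := by
  refine ne_top_of_le_ne_top ?_ (XupNorm_le_XjNorm hp' 0 lam)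
  rw [XjNorm_level_zero hp', tsum_eq_sum (s := h.toFinset) (by simp)]
  exact ENNReal.sum_ne_top.2 fun _ _ => enorm_ne_top

theorem XjNorm_of_support_subset (hp' : 0 < p') {j : ℕ} {m : Fin d → ℤ}
    {lam : (Fin d → ℤ) → ℂ} (h : ∀ k, lam k ≠ 0 → inDyadic d j m k) :
    XjNorm d u p p' j lam = ((2 : ℝ≥0∞) ^ (j * d)) ^ (1 / p - 1 / u) *
      (∑ k ∈ dyadicCube d j m, ‖lam k‖ₑ ^ p') ^ (1 / p') := by
  rw [XjNorm, tsum_eq_single m, tsum_inDyadic j m fun k => (‖lam k‖₊ : ℝ≥0∞) ^ p']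
  · rfl
  intro m' hm'
  have hzero : ∀ k : {k // inDyadic d j m' k}, lam k = 0 := fun k =>
    by_contra fun hk => hm' (inDyadic_unique k.2 (h k hk))
  simp [hzero, ENNReal.zero_rpow_of_pos hp', hp']

end XupNorm

theorem map_sum_pi_single_of_finite_support {ι R : Type*} [DecidableEq ι] [Semiring R]
    {f : (ι → R) → R}
    (hadd : ∀ x y : ι → R, (Function.support x).Finite → (Function.support y).Finite →
      f (x + y) = f x + f y)
    (hsmul : ∀ (c : R) (x : ι → R), (Function.support x).Finite → f (c • x) = c * f x)
    (s : Finset ι) (c : ι → R) :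
    f (∑ k ∈ s, Pi.single k (c k)) = ∑ k ∈ s, c k * f (Pi.single k 1) := by
  have hfin : ∀ t : Finset ι, (Function.support (∑ k ∈ t, Pi.single k (c k))).Finite :=
    fun t => t.finite_toSet.subset fun n hn => by
      by_contra hnt
      exact hn (by simp [Finset.sum_apply, Finset.sum_pi_single, Finset.mem_coe.not.1 hnt])
  induction s using Finset.induction_on with
  | empty => simpa using hsmul 0 0 (by simp)
  | insert a s ha ih =>
    have hsingle : Pi.single a (c a) = c a • (Pi.single a 1 : ι → R) := by
      rw [← Pi.single_smul', smul_eq_mul, mul_one]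
    have hsingle_fin : (Function.support (Pi.single a 1 : ι → R)).Finite :=
      (Set.finite_singleton a).subset Pi.support_single_subset
    rw [Finset.sum_insert ha, Finset.sum_insert ha, hadd _ _ (by simpa using hfin {a}) (hfin s),
      hsingle, hsmul _ _ hsingle_fin, ih]

theorem enorm_conj_mul_norm_rpow_rpow {p p' : ℝ} (hpq : p.HolderConjugate p') (z : ℂ) :
    ‖conj z * ((‖z‖ ^ (p - 2) : ℝ) : ℂ)‖ₑ ^ p' = ‖z‖ₑ ^ p := by
  have hnorm : ‖conj z * ((‖z‖ ^ (p - 2) : ℝ) : ℂ)‖ = ‖z‖ ^ (p - 1) := by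
    rcases eq_or_ne z 0 with rfl | hz
    · simp [Real.zero_rpow hpq.sub_one_ne_zero]
    rw [norm_mul, RCLike.norm_conj, Complex.norm_real, Real.norm_of_nonneg (by positivity),
      show p - 1 = 1 + (p - 2) by ring, Real.rpow_add (norm_pos_iff.2 hz), Real.rpow_one]
  rw [← ofReal_norm, hnorm, ← ENNReal.ofReal_rpow_of_nonneg (norm_nonneg z) hpq.sub_one_pos.le,
    ← ENNReal.rpow_mul, hpq.sub_one_mul_conj, ofReal_norm]

theorem conj_mul_norm_rpow_mul_self {p : ℝ} (hp : p ≠ 0) (z : ℂ) :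
    conj z * ((‖z‖ ^ (p - 2) : ℝ) : ℂ) * z = ((‖z‖ ^ p : ℝ) : ℂ) := by
  rcases eq_or_ne z 0 with rfl | hz
  · simp [Real.zero_rpow hp]
  rw [mul_right_comm, Complex.conj_mul', ← Complex.ofReal_pow, ← Complex.ofReal_mul,
    ← Real.rpow_natCast, ← Real.rpow_add (norm_pos_iff.2 hz)]
  norm_num

theorem enorm_sum_conj_mul_norm_rpow_mul_self {ι : Type*} {p : ℝ} (hp : 0 < p) (s : Finset ι)
    (μ : ι → ℂ) :
    ‖∑ k ∈ s, conj (μ k) * ((‖μ k‖ ^ (p - 2) : ℝ) : ℂ) * μ k‖ₑ = ∑ k ∈ s, ‖μ k‖ₑ ^ p := by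
  have hpow : ∀ k ∈ s, 0 ≤ ‖μ k‖ ^ p := fun k _ => by positivity
  rw [Finset.sum_congr rfl fun k _ => conj_mul_norm_rpow_mul_self hp.ne' (μ k),
    ← Complex.ofReal_sum, ← ofReal_norm, Complex.norm_real,
    Real.norm_of_nonneg (Finset.sum_nonneg hpow), ENNReal.ofReal_sum_of_nonneg hpow]
  refine Finset.sum_congr rfl fun k _ => ?_
  rw [← ENNReal.ofReal_rpow_of_nonneg (norm_nonneg _) hp.le, ofReal_norm]

theorem ENNReal.rpow_one_div_le_of_le_mul_rpow {A K : ℝ≥0∞} {p q : ℝ} (hpq : p.HolderConjugate q)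
    (hA : A ≠ ⊤) (h : A ≤ K * A ^ (1 / q)) : A ^ (1 / p) ≤ K := by
  rcases eq_or_ne A 0 with rfl | hA₀
  · rw [ENNReal.zero_rpow_of_pos hpq.one_div_pos]
    exact zero_le
  have hAq₀ : A ^ (1 / q) ≠ 0 := by simp [hA₀, hA]
  have hAq : A ^ (1 / q) ≠ ⊤ := by simp [hA₀, hA]
  rw [← ENNReal.mul_le_mul_iff_left hAq₀ hAq, ← ENNReal.rpow_add _ _ hA₀ hA]
  simpa [hpq.inv_add_inv_eq_one] using h

section MorreyDual

variable {d : ℕ} {u p p' : ℝ}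

theorem cube_term_le_of_bounded_functional (hpq : p.HolderConjugate p')
    {f : ((Fin d → ℤ) → ℂ) → ℂ} {C : ℝ≥0∞}
    (hlin : ∀ (s : Finset (Fin d → ℤ)) (c : (Fin d → ℤ) → ℂ),
      f (∑ k ∈ s, Pi.single k (c k)) = ∑ k ∈ s, c k * f (Pi.single k 1))
    (hbound : ∀ lam, (Function.support lam).Finite → ‖f lam‖ₑ ≤ C * XupNorm d u p p' lam)
    (j : ℕ) (m : Fin d → ℤ) :
    ((2 : ℝ≥0∞) ^ (j * d)) ^ (1 / u - 1 / p) *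
      (∑' k : {k // inDyadic d j m k}, ‖f (Pi.single k 1)‖ₑ ^ p) ^ (1 / p) ≤ C := by
  set μ : (Fin d → ℤ) → ℂ := fun k => f (Pi.single k 1)
  set B : ℝ≥0∞ := (2 : ℝ≥0∞) ^ (j * d)
  set S := dyadicCube d j m
  set A := ∑ k ∈ S, ‖μ k‖ₑ ^ p
  set c : (Fin d → ℤ) → ℂ := fun k => conj (μ k) * ((‖μ k‖ ^ (p - 2) : ℝ) : ℂ)
  set lam := ∑ k ∈ S, Pi.single k (c k)
  have hsupp : ∀ n, lam n ≠ 0 → n ∈ S := fun n hn => by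
    by_contra hnS
    simp [lam, Finset.sum_apply, Finset.sum_pi_single, hnS] at hn
  have hf : ‖f lam‖ₑ = A := by
    rw [hlin]
    exact enorm_sum_conj_mul_norm_rpow_mul_self hpq.pos S μ
  have hX : XupNorm d u p p' lam ≤ B ^ (1 / p - 1 / u) * A ^ (1 / p') := by
    refine (XupNorm_le_XjNorm hpq.symm.pos j lam).trans_eq ?_
    rw [XjNorm_of_support_subset hpq.symm.pos fun k hk => mem_dyadicCube.1 (hsupp k hk)]
    refine congrArg _ (congrArg (· ^ (1 / p')) (Finset.sum_congr rfl fun k hk => ?_))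
    simp only [lam, Finset.sum_apply, Finset.sum_pi_single, if_pos hk]
    exact enorm_conj_mul_norm_rpow_rpow hpq (μ k)
  have hA : A ^ (1 / p) ≤ C * B ^ (1 / p - 1 / u) := by
    refine ENNReal.rpow_one_div_le_of_le_mul_rpow hpq
      (ENNReal.sum_ne_top.2 fun k _ => by simp [hpq.nonneg]) ?_
    calc A = ‖f lam‖ₑ := hf.symm
      _ ≤ C * XupNorm d u p p' lam := hbound lam (S.finite_toSet.subset hsupp)
      _ ≤ C * (B ^ (1 / p - 1 / u) * A ^ (1 / p')) := by gcongr
      _ = C * B ^ (1 / p - 1 / u) * A ^ (1 / p') := (mul_assoc _ _ _).symm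
  calc B ^ (1 / u - 1 / p) * (∑' k : {k // inDyadic d j m k}, ‖μ k‖ₑ ^ p) ^ (1 / p)
      = B ^ (1 / u - 1 / p) * A ^ (1 / p) := by rw [tsum_inDyadic j m fun k => ‖μ k‖ₑ ^ p]
    _ ≤ B ^ (1 / u - 1 / p) * (C * B ^ (1 / p - 1 / u)) := by gcongr
    _ = C := by
      rw [mul_left_comm, show 1 / u - 1 / p = -(1 / p - 1 / u) by ring, mul_comm (B ^ _),
        two_pow_rpow_mul_rpow_neg, mul_one]

end MorreyDual

theorem Xup_predual_of_morrey_general (d : ℕ) (u p p' : ℝ)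
    (hp : 1 ≤ p) (hp'pos : 0 < p') (hp' : 1 / p + 1 / p' = 1) :
    (∀ mu lam : (Fin d → ℤ) → ℂ, morreyNorm d u p mu ≠ ⊤ → XupNorm d u p p' lam ≠ ⊤ →
        Summable (fun k => lam k * mu k) ∧
        (‖∑' k, lam k * mu k‖₊ : ℝ≥0∞) ≤ morreyNorm d u p mu * XupNorm d u p p' lam) ∧
    (∀ f : ((Fin d → ℤ) → ℂ) → ℂ, ∀ C : ℝ≥0∞,
        (∀ lam mu : (Fin d → ℤ) → ℂ, XupNorm d u p p' lam ≠ ⊤ → XupNorm d u p p' mu ≠ ⊤ →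
          f (lam + mu) = f lam + f mu) →
        (∀ (c : ℂ) (lam : (Fin d → ℤ) → ℂ), XupNorm d u p p' lam ≠ ⊤ →
          f (c • lam) = c * f lam) →
        (∀ lam : (Fin d → ℤ) → ℂ, XupNorm d u p p' lam ≠ ⊤ →
          (‖f lam‖₊ : ℝ≥0∞) ≤ C * XupNorm d u p p' lam) →
        morreyNorm d u p (fun k => f (fun n => if n = k then 1 else 0)) ≤ C) := by
  have hpq : p.HolderConjugate p' := by
    simpa only [one_div_one_div] using
      Real.holderConjugate_one_div (one_div_pos.2 (zero_lt_one.trans_le hp))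
        (one_div_pos.2 hp'pos) hp'
  refine ⟨fun mu lam hmu hlam => ?_, fun f C hadd hsmul hbound => ?_⟩
  · have hle : ∑' k, ‖lam k * mu k‖ₑ ≤ morreyNorm d u p mu * XupNorm d u p p' lam := by
      simpa only [enorm_mul] using tsum_enorm_mul_le_morreyNorm_mul_XupNorm hpq hmu hlam
    have hsum : Summable fun k => ‖lam k * mu k‖₊ :=
      ENNReal.tsum_coe_ne_top_iff_summable.1 (ne_top_of_le_ne_top (by finiteness) hle)
    exact ⟨hsum.of_nnnorm, enorm_tsum_le_tsum_enorm.trans hle⟩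
  · have hfin : ∀ {lam : (Fin d → ℤ) → ℂ}, (Function.support lam).Finite →
        XupNorm d u p p' lam ≠ ⊤ := XupNorm_ne_top_of_finite_support hp'pos
    have hlin := map_sum_pi_single_of_finite_support
      (fun x y hx hy => hadd x y (hfin hx) (hfin hy)) fun c x hx => hsmul c x (hfin hx)
    have hsingle : ∀ k : Fin d → ℤ, (fun n => if n = k then (1 : ℂ) else 0) = Pi.single k 1 :=
      fun k => funext fun n => (Pi.single_apply k 1 n).symm
    simp only [hsingle]
    exact iSup₂_le fun j m => cube_term_le_of_bounded_functional hpq hlin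
      (fun lam hlam => hbound lam (hfin hlam)) j m

theorem Xup_predual_of_morrey (d : ℕ) (u p p' : ℝ)
    (hp : 1 ≤ p) (hpu : p < u) (hp'pos : 0 < p') (hp' : 1 / p + 1 / p' = 1) :
    (∀ mu lam : (Fin d → ℤ) → ℂ, morreyNorm d u p mu ≠ ⊤ → XupNorm d u p p' lam ≠ ⊤ →
        Summable (fun k => lam k * mu k) ∧
        (‖∑' k, lam k * mu k‖₊ : ℝ≥0∞) ≤ morreyNorm d u p mu * XupNorm d u p p' lam) ∧
    (∀ f : ((Fin d → ℤ) → ℂ) → ℂ, ∀ C : ℝ≥0∞,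
        (∀ lam mu : (Fin d → ℤ) → ℂ, XupNorm d u p p' lam ≠ ⊤ → XupNorm d u p p' mu ≠ ⊤ →
          f (lam + mu) = f lam + f mu) →
        (∀ (c : ℂ) (lam : (Fin d → ℤ) → ℂ), XupNorm d u p p' lam ≠ ⊤ →
          f (c • lam) = c * f lam) →
        (∀ lam : (Fin d → ℤ) → ℂ, XupNorm d u p p' lam ≠ ⊤ →
          (‖f lam‖₊ : ℝ≥0∞) ≤ C * XupNorm d u p p' lam) →
        morreyNorm d u p (fun k => f (fun n => if n = k then 1 else 0)) ≤ C) :=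
  Xup_predual_of_morrey_general d u p p' hp hp'pos hp'
end

section
/- Let $0<p<u<\infty$. Define $m^0_{u,p}(\mathbb{Z}^d)=m_{u,p}(\mathbb{Z}^d)\cap c_0(\mathbb{Z}^d)$ and let $m^{00}_{u,p}(\mathbb{Z}^d)$ be the closure of the finitely supported sequences $c_{00}(\mathbb{Z}^d)$ in $m_{u,p}(\mathbb{Z}^d)$. Then $m^0_{u,p}$ and $m^{00}_{u,p}$ are closed subspaces of $m_{u,p}(\mathbb{Z}^d)$ and the inclusions are strict: $m^{00}_{u,p}(\mathbb{Z}^d)\subsetneq m^0_{u,p}(\mathbb{Z}^d)\subsetneq m_{u,p}(\mathbb{Z}^d)$. -/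
open scoped ENNReal NNReal BigOperators
open Filter

/-!
Every entry of a sequence is bounded by its Morrey quasi-norm (take the unit cube at that entry),
so convergence in `m_{u,p}` forces uniform convergence; hence `m⁰_{u,p}` is closed and contains
`m⁰⁰_{u,p}`. The quasi-norm satisfies a quasi-triangle inequality, which makes `m⁰⁰_{u,p}` closed.

For the first strict inclusion, put the value `2^{-jd/u}` on the cube `Q_j` of side `2^j` with
corner `(4^j, …, 4^j)`. A dyadic cube of side `2^ν` meets `Q_j` in at most
`min(2^{νd}, 2^{jd})` points, and summing over `j` gives `p`-th power sums `≲ 2^{νd(1-p/u)}`, so the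
sequence lies in `m_{u,p}`; it lies in `ℓ^{2u}`, hence in `c₀`. But `Q_j` alone carries quasi-norm
`1`, and a finitely supported sequence vanishes on some `Q_j`.

For the second, the indicator of the points `(2^i, …, 2^i)` does not tend to `0`, while a dyadic
cube of side `2^ν` contains at most `ν + 1` of them (those with `i ≥ ν` are determined by the
cube's corner), which is dominated by `2^{νd(1-p/u)}`.
-/

open Set Function

namespace MorreySequence

variable {d : ℕ}

def dyadicCube (d j : ℕ) (m : Fin d → ℤ) : Set (Fin d → ℤ) := {k | inDyadic d j m k}

lemma dyadicCube_eq_piFinset (j : ℕ) (m : Fin d → ℤ) :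
    dyadicCube d j m =
      Fintype.piFinset fun i => Finset.Ico (2 ^ j * m i) (2 ^ j * (m i + 1)) := by
  ext k
  simp [dyadicCube, inDyadic]

lemma encard_dyadicCube (j : ℕ) (m : Fin d → ℤ) :
    ((dyadicCube d j m).encard : ℝ≥0∞) = 2 ^ (j * d) := by
  have hcard (i : Fin d) : (2 ^ j * (m i + 1) - 2 ^ j * m i).toNat = 2 ^ j := by
    rw [show 2 ^ j * (m i + 1) - 2 ^ j * m i = ((2 ^ j : ℕ) : ℤ) by push_cast; ring,
      Int.toNat_natCast]
  rw [dyadicCube_eq_piFinset, encard_coe_eq_coe_finsetCard, Fintype.card_piFinset]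
  simp [Int.card_Ico, hcard, pow_mul]

lemma dyadicCube_zero (m : Fin d → ℤ) : dyadicCube d 0 m = {m} := by
  ext k
  simp only [dyadicCube, inDyadic, pow_zero, one_mul, mem_ofPred_eq, mem_singleton_iff, funext_iff]
  exact forall_congr' fun i => by omega

noncomputable def cubeSum (p : ℝ) (lam : (Fin d → ℤ) → ℂ) (j : ℕ) (m : Fin d → ℤ) : ℝ≥0∞ :=
  ∑' k : dyadicCube d j m, ‖lam k‖ₑ ^ p

lemma morreyNorm_eq_iSup (u p : ℝ) (lam : (Fin d → ℤ) → ℂ) :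
    morreyNorm d u p lam =
      ⨆ (j : ℕ) (m : Fin d → ℤ),
        2 ^ ((j * d : ℝ) * (1 / u - 1 / p)) * cubeSum p lam j m ^ (1 / p) := by
  simp only [morreyNorm, ← ENNReal.rpow_natCast, ← ENNReal.rpow_mul]
  push_cast
  rfl

lemma le_morreyNorm (u p : ℝ) (lam : (Fin d → ℤ) → ℂ) (j : ℕ) (m : Fin d → ℤ) :
    2 ^ ((j * d : ℝ) * (1 / u - 1 / p)) * cubeSum p lam j m ^ (1 / p) ≤ morreyNorm d u p lam := by
  rw [morreyNorm_eq_iSup]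
  exact le_iSup₂ (f := fun (j : ℕ) (m : Fin d → ℤ) =>
    (2 : ℝ≥0∞) ^ ((j * d : ℝ) * (1 / u - 1 / p)) * cubeSum p lam j m ^ (1 / p)) j m

lemma enorm_le_morreyNorm (u : ℝ) {p : ℝ} (hp : 0 < p) (lam : (Fin d → ℤ) → ℂ)
    (k : Fin d → ℤ) : ‖lam k‖ₑ ≤ morreyNorm d u p lam := by
  have hsum : cubeSum p lam 0 k = ‖lam k‖ₑ ^ p := by
    rw [cubeSum, dyadicCube_zero]
    exact tsum_singleton k fun k => ‖lam k‖ₑ ^ p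
  calc ‖lam k‖ₑ = 2 ^ (((0 : ℕ) * d : ℝ) * (1 / u - 1 / p)) * cubeSum p lam 0 k ^ (1 / p) := by
        rw [hsum, ← ENNReal.rpow_mul, mul_one_div_cancel hp.ne']
        simp
    _ ≤ morreyNorm d u p lam := le_morreyNorm u p lam 0 k

lemma cubeSum_add_le {p : ℝ} (hp : 0 < p) (f g : (Fin d → ℤ) → ℂ) (j : ℕ) (m : Fin d → ℤ) :
    cubeSum p (f + g) j m ≤
      ENNReal.LpAddConst (ENNReal.ofReal p)⁻¹ * (cubeSum p f j m + cubeSum p g j m) := by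
  rw [cubeSum, cubeSum, cubeSum, ← ENNReal.tsum_add, ← ENNReal.tsum_mul_left]
  refine ENNReal.tsum_le_tsum fun k => ?_
  calc ‖(f + g) k‖ₑ ^ p ≤ (‖f k‖ₑ + ‖g k‖ₑ) ^ p := by gcongr; exact enorm_add_le _ _
    _ ≤ _ := ENNReal.rpow_add_le_mul_rpow_add_rpow' _ _ hp.le

lemma exists_morreyNorm_add_le (d : ℕ) (u : ℝ) {p : ℝ} (hp : 0 < p) :
    ∃ C ≠ ∞, ∀ f g : (Fin d → ℤ) → ℂ,
      morreyNorm d u p (f + g) ≤ C * (morreyNorm d u p f + morreyNorm d u p g) := by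
  set K₁ := ENNReal.LpAddConst (ENNReal.ofReal p)⁻¹
  set K₂ := ENNReal.LpAddConst (ENNReal.ofReal (1 / p))⁻¹
  have hp' : 0 ≤ 1 / p := by positivity
  refine ⟨K₁ ^ (1 / p) * K₂, ENNReal.mul_ne_top (ENNReal.rpow_ne_top_of_nonneg hp'
    (ENNReal.LpAddConst_lt_top _).ne) (ENNReal.LpAddConst_lt_top _).ne, fun f g => ?_⟩
  rw [morreyNorm_eq_iSup]
  refine iSup₂_le fun j m => ?_
  set W : ℝ≥0∞ := 2 ^ ((j * d : ℝ) * (1 / u - 1 / p))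
  calc W * cubeSum p (f + g) j m ^ (1 / p)
      ≤ W * (K₁ * (cubeSum p f j m + cubeSum p g j m)) ^ (1 / p) := by
        gcongr; exact cubeSum_add_le hp f g j m
    _ ≤ W * (K₁ ^ (1 / p) * (K₂ * (cubeSum p f j m ^ (1 / p) + cubeSum p g j m ^ (1 / p)))) := by
        rw [ENNReal.mul_rpow_of_nonneg _ _ hp']
        gcongr
        exact ENNReal.rpow_add_le_mul_rpow_add_rpow' _ _ hp'
    _ = K₁ ^ (1 / p) * K₂ * (W * cubeSum p f j m ^ (1 / p) + W * cubeSum p g j m ^ (1 / p)) := by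
        ring
    _ ≤ K₁ ^ (1 / p) * K₂ * (morreyNorm d u p f + morreyNorm d u p g) := by
        gcongr <;> exact le_morreyNorm u p _ j m

def ApproxBy {G : Type*} [Sub G] (N : G → ℝ≥0∞) (P : G → Prop) (x : G) : Prop :=
  ∀ ε : ℝ≥0∞, 0 < ε → ∃ y, P y ∧ N (x - y) < ε

lemma ApproxBy.mono {G : Type*} [Sub G] {N : G → ℝ≥0∞} {P Q : G → Prop} {x : G}
    (h : ApproxBy N P x) (hPQ : ∀ y, P y → Q y) : ApproxBy N Q x := fun ε hε =>
  let ⟨y, hy, hxy⟩ := h ε hε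
  ⟨y, hPQ y hy, hxy⟩

lemma ApproxBy.of_approxBy {G : Type*} [AddGroup G] {N : G → ℝ≥0∞} {C : ℝ≥0∞} (hC : C ≠ ∞)
    (hN : ∀ f g, N (f + g) ≤ C * (N f + N g)) {P : G → Prop} {x : G}
    (h : ApproxBy N (ApproxBy N P) x) : ApproxBy N P x := by
  intro ε hε
  obtain ⟨δ, hδ, hδε⟩ :=
    ENNReal.exists_pos_mul_lt (ENNReal.mul_ne_top (by norm_num : (2 : ℝ≥0∞) ≠ ∞) hC) hε.ne'
  obtain ⟨y, hy, hxy⟩ := h δ hδ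
  obtain ⟨z, hz, hyz⟩ := hy δ hδ
  refine ⟨z, hz, ?_⟩
  calc N (x - z) = N ((x - y) + (y - z)) := by rw [sub_add_sub_cancel]
    _ ≤ C * (N (x - y) + N (y - z)) := hN _ _
    _ ≤ C * (δ + δ) := by gcongr
    _ = δ * (2 * C) := by ring
    _ < ε := hδε

lemma tendsto_zero_of_approxBy {u p : ℝ} (hp : 0 < p) {lam : (Fin d → ℤ) → ℂ}
    (h : ApproxBy (morreyNorm d u p) (Tendsto · cofinite (nhds 0)) lam) :
    Tendsto lam cofinite (nhds 0) := by
  rw [tendsto_zero_iff_enorm_tendsto_zero, ENNReal.tendsto_nhds_zero]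
  intro ε hε
  have hε2 : 0 < ε / 2 := ENNReal.half_pos hε.ne'
  obtain ⟨mu, hmu, hlt⟩ := h (ε / 2) hε2
  rw [tendsto_zero_iff_enorm_tendsto_zero, ENNReal.tendsto_nhds_zero] at hmu
  filter_upwards [hmu (ε / 2) hε2] with k hk
  calc ‖lam k‖ₑ ≤ ‖(lam - mu) k‖ₑ + ‖mu k‖ₑ := by
        simpa using enorm_add_le ((lam - mu) k) (mu k)
    _ ≤ ε / 2 + ε / 2 := add_le_add ((enorm_le_morreyNorm u hp _ k).trans hlt.le) hk
    _ = ε := ENNReal.add_halves ε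

lemma natCast_mul_one_sub_div_pos (hd : 0 < d) {u p : ℝ} (hp : 0 < p) (hpu : p < u) :
    0 < (d : ℝ) * (1 - p / u) :=
  mul_pos (by exact_mod_cast hd) (sub_pos.2 ((div_lt_one (hp.trans hpu)).2 hpu))

lemma memMorrey_of_cubeSum_le {u p : ℝ} (hp : 0 < p) {lam : (Fin d → ℤ) → ℂ} {C : ℝ≥0∞}
    (hC : C ≠ ∞) (h : ∀ j m, cubeSum p lam j m ≤ C * 2 ^ (j * (d * (1 - p / u)))) :
    MemMorrey d u p lam := by
  have hp' : 0 ≤ 1 / p := by positivity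
  refine ne_top_of_le_ne_top (ENNReal.rpow_ne_top_of_nonneg hp' hC) ?_
  rw [morreyNorm_eq_iSup]
  refine iSup₂_le fun j m => ?_
  calc 2 ^ ((j * d : ℝ) * (1 / u - 1 / p)) * cubeSum p lam j m ^ (1 / p)
      ≤ 2 ^ ((j * d : ℝ) * (1 / u - 1 / p)) * (C * 2 ^ (j * (d * (1 - p / u)))) ^ (1 / p) := by
        gcongr; exact h j m
    _ = C ^ (1 / p) * 2 ^ ((j * d : ℝ) * (1 / u - 1 / p) + j * (d * (1 - p / u)) * (1 / p)) := by
        rw [ENNReal.mul_rpow_of_nonneg _ _ hp', ← ENNReal.rpow_mul,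
          ENNReal.rpow_add _ _ two_ne_zero ENNReal.ofNat_ne_top]
        ring
    _ = C ^ (1 / p) := by
        rw [show (j * d : ℝ) * (1 / u - 1 / p) + j * (d * (1 - p / u)) * (1 / p) = 0 by
          field_simp; ring]
        simp

lemma tsum_indicator_apply_of_mem {ι α M : Type*} [AddCommMonoid M] [TopologicalSpace M]
    {B : ι → Set α} (hB : Pairwise (Disjoint on B)) (f : ι → α → M) {j : ι} {k : α}
    (hk : k ∈ B j) : ∑' i, (B i).indicator (f i) k = f j k := by
  rw [tsum_eq_single j fun i hij => indicator_of_notMem (disjoint_left.1 (hB hij.symm) hk) _,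
    indicator_of_mem hk]

lemma tsum_indicator_const_subtype {α : Type*} (S B : Set α) (c : ℝ≥0∞) :
    ∑' k : S, B.indicator (fun _ => c) k = (S ∩ B).encard * c := by
  rw [tsum_subtype S, indicator_indicator, ← tsum_subtype, ENNReal.tsum_set_const]

def block (d j : ℕ) : Set (Fin d → ℤ) := dyadicCube d j fun _ => 2 ^ j

lemma eq_of_mem_block (hd : 0 < d) {j j' : ℕ} {k : Fin d → ℤ} (hk : k ∈ block d j)
    (hk' : k ∈ block d j') : j = j' := by
  have key {j j' : ℕ} (hk : k ∈ block d j) (hk' : k ∈ block d j') : ¬ j < j' := by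
    intro hjj'
    have h1 : (2 : ℤ) ^ j ≤ 2 ^ j' := pow_le_pow_right₀ (by norm_num) hjj'.le
    have h2 : (2 : ℤ) ^ (j + 1) ≤ 2 ^ j' := pow_le_pow_right₀ (by norm_num) hjj'
    have h3 : (1 : ℤ) ≤ 2 ^ j := one_le_pow₀ (by norm_num)
    have := mul_le_mul h1 (show (2 : ℤ) ^ j + 1 ≤ 2 ^ j' by rw [pow_succ] at h2; linarith)
      (by positivity) (by positivity)
    linarith [(hk ⟨0, hd⟩).2, (hk' ⟨0, hd⟩).1]
  exact le_antisymm (not_lt.1 (key hk' hk)) (not_lt.1 (key hk hk'))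

lemma pairwise_disjoint_block (hd : 0 < d) : Pairwise (Disjoint on block d) :=
  fun _ _ hjj' => disjoint_left.2 fun _ hk hk' => hjj' (eq_of_mem_block hd hk hk')

lemma exists_block_eqOn_zero (hd : 0 < d) {mu : (Fin d → ℤ) → ℂ}
    (hmu : (Function.support mu).Finite) : ∃ j, ∀ k ∈ block d j, mu k = 0 := by
  by_contra! h
  choose w hw hmuw using h
  exact infinite_of_injective_forall_mem
    (fun j j' (hjj' : w j = w j') => eq_of_mem_block hd (hw j) (hjj' ▸ hw j')) hmuw hmu

noncomputable def blockSeq (d : ℕ) (u : ℝ) (k : Fin d → ℤ) : ℂ :=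
  ∑' j, (block d j).indicator (fun _ => (((2 : ℝ) ^ (-(j * d : ℝ) / u) : ℝ) : ℂ)) k

lemma enorm_blockSeq_rpow (hd : 0 < d) (u : ℝ) {r : ℝ} (hr : 0 < r) (k : Fin d → ℤ) :
    ‖blockSeq d u k‖ₑ ^ r =
      ∑' j, (block d j).indicator (fun _ => (2 : ℝ≥0∞) ^ (-(j * d : ℝ) / u * r)) k := by
  by_cases hk : ∃ j, k ∈ block d j
  · obtain ⟨j, hj⟩ := hk
    rw [blockSeq, tsum_indicator_apply_of_mem (pairwise_disjoint_block hd) _ hj,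
      tsum_indicator_apply_of_mem (pairwise_disjoint_block hd) _ hj, ENNReal.rpow_mul,
      ← ofReal_norm, Complex.norm_real, Real.norm_of_nonneg (by positivity),
      ← ENNReal.ofReal_rpow_of_pos two_pos]
    norm_num
  · push Not at hk
    simp [blockSeq, indicator_of_notMem (hk _), ENNReal.zero_rpow_of_pos hr]

lemma tsum_enorm_blockSeq_rpow (hd : 0 < d) (u : ℝ) {r : ℝ} (hr : 0 < r) (S : Set (Fin d → ℤ)) :
    ∑' k : S, ‖blockSeq d u k‖ₑ ^ r =
      ∑' j : ℕ, ((S ∩ block d j).encard : ℝ≥0∞) * 2 ^ (-(j * d : ℝ) / u * r) := by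
  simp_rw [enorm_blockSeq_rpow hd u hr]
  rw [ENNReal.tsum_comm]
  simp_rw [tsum_indicator_const_subtype]

lemma tendsto_blockSeq (hd : 0 < d) {u : ℝ} (hu : 0 < u) :
    Tendsto (blockSeq d u) cofinite (nhds 0) := by
  have hr : 0 < 2 * u := by positivity
  have hterm (j : ℕ) : (((univ ∩ block d j).encard : ℝ≥0∞) * 2 ^ (-(j * d : ℝ) / u * (2 * u))) =
      ((2 : ℝ≥0∞) ^ (-(d : ℝ))) ^ j := by
    rw [univ_inter, block, encard_dyadicCube, ← ENNReal.rpow_natCast, ← ENNReal.rpow_natCast _ j,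
      ← ENNReal.rpow_mul, ← ENNReal.rpow_add _ _ two_ne_zero ENNReal.ofNat_ne_top]
    congr 1
    push_cast
    field_simp
    ring
  have hlt : (2 : ℝ≥0∞) ^ (-(d : ℝ)) < 1 :=
    ENNReal.rpow_lt_one_of_one_lt_of_neg (by norm_num) (by simp [hd])
  have hsum : ∑' k, ‖blockSeq d u k‖ₑ ^ (2 * u) ≠ ∞ := by
    rw [← tsum_univ, tsum_enorm_blockSeq_rpow hd u hr, tsum_congr hterm, ENNReal.tsum_geometric]
    exact ENNReal.inv_ne_top.2 (tsub_pos_iff_lt.2 hlt).ne'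
  have hroot : Tendsto (fun x : ℝ≥0∞ => x ^ (1 / (2 * u))) (nhds 0) (nhds 0) := by
    have := (ENNReal.continuous_rpow_const (y := 1 / (2 * u))).tendsto 0
    rwa [ENNReal.zero_rpow_of_pos (one_div_pos.2 hr)] at this
  rw [tendsto_zero_iff_enorm_tendsto_zero]
  convert hroot.comp (ENNReal.tendsto_cofinite_zero_of_tsum_ne_top hsum) using 2 with k
  rw [comp_apply, ← ENNReal.rpow_mul, mul_one_div_cancel hr.ne', ENNReal.rpow_one]

lemma tsum_pow_dist_le (c : ℝ≥0∞) (ν : ℕ) : ∑' j, c ^ Nat.dist ν j ≤ 2 * (1 - c)⁻¹ := by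
  -- `j ↦ (j ≤ ν, |ν - j|)` embeds the two-sided sum into two copies of a geometric series
  have hinj : Injective fun j => (decide (j ≤ ν), Nat.dist ν j) := by
    intro a b hab
    simp only [Prod.mk.injEq, decide_eq_decide] at hab
    unfold Nat.dist at hab
    omega
  calc ∑' j, c ^ Nat.dist ν j ≤ ∑' q : Bool × ℕ, c ^ q.2 :=
        ENNReal.tsum_comp_le_tsum_of_injective hinj fun q => c ^ q.2
    _ = 2 * (1 - c)⁻¹ := by
        rw [ENNReal.tsum_prod (f := fun _ n => c ^ n), tsum_fintype]
        simp [ENNReal.tsum_geometric, two_mul]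

lemma encard_inter_block_mul_le (u p : ℝ) (ν j : ℕ) (m : Fin d → ℤ) :
    ((dyadicCube d ν m ∩ block d j).encard : ℝ≥0∞) * 2 ^ (-(j * d : ℝ) / u * p) ≤
      2 ^ (ν * (d * (1 - p / u))) *
        ((2 : ℝ≥0∞) ^ (-min (d * (1 - p / u)) (d * p / u))) ^ Nat.dist ν j := by
  set κ := min (d * (1 - p / u)) (d * p / u)
  rw [← ENNReal.rpow_natCast, ← ENNReal.rpow_mul, ← ENNReal.rpow_add _ _ two_ne_zero
    ENNReal.ofNat_ne_top]
  rcases le_or_gt j ν with hjν | hνj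
  · calc ((dyadicCube d ν m ∩ block d j).encard : ℝ≥0∞) * 2 ^ (-(j * d : ℝ) / u * p)
        ≤ 2 ^ (j * d) * 2 ^ (-(j * d : ℝ) / u * p) := by
          gcongr
          rw [block, ← encard_dyadicCube]
          exact ENat.toENNReal_le.2 (encard_le_encard inter_subset_right)
      _ ≤ _ := by
          rw [← ENNReal.rpow_natCast, ← ENNReal.rpow_add _ _ two_ne_zero ENNReal.ofNat_ne_top]
          refine ENNReal.rpow_le_rpow_of_exponent_le one_le_two ?_
          rw [Nat.dist_eq_sub_of_le_right hjν, Nat.cast_sub hjν]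
          have : κ * (ν - j) ≤ d * (1 - p / u) * (ν - j) :=
            mul_le_mul_of_nonneg_right (min_le_left _ _) (by simp [hjν])
          push_cast
          linear_combination this
  · calc ((dyadicCube d ν m ∩ block d j).encard : ℝ≥0∞) * 2 ^ (-(j * d : ℝ) / u * p)
        ≤ 2 ^ (ν * d) * 2 ^ (-(j * d : ℝ) / u * p) := by
          gcongr
          rw [← encard_dyadicCube ν m]
          exact ENat.toENNReal_le.2 (encard_le_encard inter_subset_left)
      _ ≤ _ := by
          rw [← ENNReal.rpow_natCast, ← ENNReal.rpow_add _ _ two_ne_zero ENNReal.ofNat_ne_top]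
          refine ENNReal.rpow_le_rpow_of_exponent_le one_le_two ?_
          rw [Nat.dist_eq_sub_of_le hνj.le, Nat.cast_sub hνj.le]
          have : κ * (j - ν) ≤ d * p / u * (j - ν) :=
            mul_le_mul_of_nonneg_right (min_le_right _ _) (by simp [hνj.le])
          push_cast
          linear_combination this

lemma memMorrey_blockSeq (hd : 0 < d) {u p : ℝ} (hp : 0 < p) (hpu : p < u) :
    MemMorrey d u p (blockSeq d u) := by
  have hu : 0 < u := hp.trans hpu
  set κ := min (d * (1 - p / u)) (d * p / u)
  have hκ : 0 < κ := lt_min (natCast_mul_one_sub_div_pos hd hp hpu) (by positivity)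
  have hlt : (2 : ℝ≥0∞) ^ (-κ) < 1 :=
    ENNReal.rpow_lt_one_of_one_lt_of_neg (by norm_num) (neg_neg_of_pos hκ)
  refine memMorrey_of_cubeSum_le hp (C := 2 * (1 - 2 ^ (-κ))⁻¹)
    (ENNReal.mul_ne_top (by norm_num) (ENNReal.inv_ne_top.2 (tsub_pos_iff_lt.2 hlt).ne'))
    fun ν m => ?_
  calc cubeSum p (blockSeq d u) ν m
      = ∑' j : ℕ, ((dyadicCube d ν m ∩ block d j).encard : ℝ≥0∞) * 2 ^ (-(j * d : ℝ) / u * p) :=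
        tsum_enorm_blockSeq_rpow hd u hp _
    _ ≤ ∑' j : ℕ, 2 ^ (ν * (d * (1 - p / u))) * ((2 : ℝ≥0∞) ^ (-κ)) ^ Nat.dist ν j :=
        ENNReal.tsum_le_tsum fun j => encard_inter_block_mul_le u p ν j m
    _ ≤ 2 ^ (ν * (d * (1 - p / u))) * (2 * (1 - 2 ^ (-κ))⁻¹) := by
        rw [ENNReal.tsum_mul_left]
        gcongr
        exact tsum_pow_dist_le _ ν
    _ = _ := mul_comm _ _

lemma one_le_morreyNorm_blockSeq_sub (hd : 0 < d) (u : ℝ) {p : ℝ} (hp : 0 < p)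
    {mu : (Fin d → ℤ) → ℂ} {j : ℕ} (hmu : ∀ k ∈ block d j, mu k = 0) :
    1 ≤ morreyNorm d u p (blockSeq d u - mu) := by
  have hsum : cubeSum p (blockSeq d u - mu) j (fun _ => 2 ^ j) =
      2 ^ (j * d) * 2 ^ (-(j * d : ℝ) / u * p) := by
    rw [cubeSum, ← encard_dyadicCube j (fun _ => 2 ^ j), ← ENNReal.tsum_set_const]
    refine tsum_congr fun k => ?_
    rw [Pi.sub_apply, hmu k k.2, sub_zero, enorm_blockSeq_rpow hd u hp,
      tsum_indicator_apply_of_mem (pairwise_disjoint_block hd) _ k.2]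
  calc (1 : ℝ≥0∞)
      = 2 ^ ((j * d : ℝ) * (1 / u - 1 / p)) *
          (2 ^ (j * d) * 2 ^ (-(j * d : ℝ) / u * p)) ^ (1 / p) := by
        rw [← ENNReal.rpow_natCast, ← ENNReal.rpow_add _ _ two_ne_zero ENNReal.ofNat_ne_top,
          ← ENNReal.rpow_mul, ← ENNReal.rpow_add _ _ two_ne_zero ENNReal.ofNat_ne_top,
          show (j * d : ℝ) * (1 / u - 1 / p) + ((j * d : ℕ) + -(j * d : ℝ) / u * p) * (1 / p) = 0
            by push_cast; field_simp; ring]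
        simp
    _ ≤ morreyNorm d u p (blockSeq d u - mu) := hsum ▸ le_morreyNorm u p _ j _

lemma not_memMorrey00_blockSeq (hd : 0 < d) (u : ℝ) {p : ℝ} (hp : 0 < p) :
    ¬ MemMorrey00 d u p (blockSeq d u) := by
  rintro ⟨-, happrox⟩
  obtain ⟨mu, hmu, hlt⟩ := happrox 1 one_pos
  obtain ⟨j, hj⟩ := exists_block_eqOn_zero hd hmu
  exact (one_le_morreyNorm_blockSeq_sub hd u hp hj).not_gt hlt

lemma exists_natCast_add_one_le {γ : ℝ} (hγ : 0 < γ) :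
    ∃ C ≠ ∞, ∀ ν : ℕ, (ν + 1 : ℝ≥0∞) ≤ C * 2 ^ (ν * γ) := by
  set a := γ * Real.log 2
  have ha : 0 < a := mul_pos hγ (Real.log_pos one_lt_two)
  refine ⟨ENNReal.ofReal (1 + 1 / a), ENNReal.ofReal_ne_top, fun ν => ?_⟩
  have hreal : (ν + 1 : ℝ) ≤ (1 + 1 / a) * 2 ^ (ν * γ) :=
    calc (ν + 1 : ℝ) ≤ (1 + 1 / a) * (ν * a + 1) := by
          rw [show (1 + 1 / a) * (ν * a + 1) = ν + 1 + (ν * a + 1 / a) by field_simp; ring]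
          exact le_add_of_nonneg_right (by positivity)
      _ ≤ (1 + 1 / a) * 2 ^ (ν * γ) := by
          rw [Real.rpow_def_of_pos two_pos]
          gcongr
          linarith [Real.add_one_le_exp (Real.log 2 * (ν * γ))]
  calc (ν + 1 : ℝ≥0∞) = ENNReal.ofReal (ν + 1) := by norm_cast
    _ ≤ ENNReal.ofReal ((1 + 1 / a) * 2 ^ (ν * γ)) := ENNReal.ofReal_le_ofReal hreal
    _ = ENNReal.ofReal (1 + 1 / a) * 2 ^ (ν * γ) := by
        rw [ENNReal.ofReal_mul (by positivity), ← ENNReal.ofReal_rpow_of_pos two_pos]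
        norm_num

def diagPow (d i : ℕ) : Fin d → ℤ := fun _ => 2 ^ i

noncomputable def sparseSeq (d : ℕ) : (Fin d → ℤ) → ℂ := (range (diagPow d)).indicator 1

lemma diagPow_injective (hd : 0 < d) : Injective (diagPow d) := fun i i' h => by
  have h0 : (2 : ℤ) ^ i = 2 ^ i' := congrFun h ⟨0, hd⟩
  exact Nat.pow_right_injective le_rfl (by exact_mod_cast h0)

lemma eq_of_diagPow_mem_dyadicCube (hd : 0 < d) {ν i i' : ℕ} {m : Fin d → ℤ} (hi : ν ≤ i)
    (hi' : ν ≤ i') (h : diagPow d i ∈ dyadicCube d ν m) (h' : diagPow d i' ∈ dyadicCube d ν m) :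
    i = i' := by
  -- `2 ^ ν` divides `2 ^ i`, so the first coordinate of the corner is `2 ^ i` itself
  have key {i : ℕ} (hi : ν ≤ i) (h : diagPow d i ∈ dyadicCube d ν m) :
      (2 : ℤ) ^ (i - ν) = m ⟨0, hd⟩ := by
    obtain ⟨hlo, hhi⟩ := h ⟨0, hd⟩
    rw [diagPow, ← Nat.add_sub_cancel' hi, pow_add] at hlo hhi
    have h1 := le_of_mul_le_mul_left hlo (by positivity)
    have h2 := lt_of_mul_lt_mul_left hhi (by positivity)
    omega
  have := Nat.pow_right_injective le_rfl (by exact_mod_cast (key hi h).trans (key hi' h').symm)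
  omega

lemma encard_dyadicCube_inter_range_diagPow_le (hd : 0 < d) (ν : ℕ) (m : Fin d → ℤ) :
    (dyadicCube d ν m ∩ range (diagPow d)).encard ≤ ν + 1 := by
  set S := {i | ν ≤ i ∧ diagPow d i ∈ dyadicCube d ν m}
  have hsub : dyadicCube d ν m ∩ range (diagPow d) ⊆ diagPow d '' (Iio ν ∪ S) := by
    rintro _ ⟨hk, i, rfl⟩
    exact ⟨i, (lt_or_ge i ν).imp id fun hi => ⟨hi, hk⟩, rfl⟩
  calc (dyadicCube d ν m ∩ range (diagPow d)).encard ≤ (diagPow d '' (Iio ν ∪ S)).encard :=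
        encard_le_encard hsub
    _ ≤ (Iio ν).encard + S.encard := (encard_image_le _ _).trans (encard_union_le _ _)
    _ ≤ ν + 1 := by
        gcongr
        · rw [← Finset.coe_range, encard_coe_eq_coe_finsetCard, Finset.card_range]
        · exact encard_le_one_iff.2 fun i i' hi hi' =>
            eq_of_diagPow_mem_dyadicCube hd hi.1 hi'.1 hi.2 hi'.2

lemma cubeSum_sparseSeq {p : ℝ} (hp : 0 < p) (ν : ℕ) (m : Fin d → ℤ) :
    cubeSum p (sparseSeq d) ν m = (dyadicCube d ν m ∩ range (diagPow d)).encard := by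
  have hpt (k : Fin d → ℤ) :
      ‖sparseSeq d k‖ₑ ^ p = (range (diagPow d)).indicator (fun _ => 1) k := by
    by_cases hk : k ∈ range (diagPow d) <;> simp [sparseSeq, hk, ENNReal.zero_rpow_of_pos hp]
  rw [cubeSum]
  simp_rw [hpt]
  rw [tsum_indicator_const_subtype, mul_one]

lemma memMorrey_sparseSeq (hd : 0 < d) {u p : ℝ} (hp : 0 < p) (hpu : p < u) :
    MemMorrey d u p (sparseSeq d) := by
  obtain ⟨C, hC, hgrowth⟩ := exists_natCast_add_one_le (natCast_mul_one_sub_div_pos hd hp hpu)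
  refine memMorrey_of_cubeSum_le hp hC fun ν m => ?_
  rw [cubeSum_sparseSeq hp]
  calc ((dyadicCube d ν m ∩ range (diagPow d)).encard : ℝ≥0∞) ≤ ((ν + 1 : ℕ∞) : ℝ≥0∞) :=
        ENat.toENNReal_le.2 (encard_dyadicCube_inter_range_diagPow_le hd ν m)
    _ ≤ C * 2 ^ (ν * (d * (1 - p / u))) := by simpa using hgrowth ν

lemma not_tendsto_sparseSeq (hd : 0 < d) : ¬ Tendsto (sparseSeq d) cofinite (nhds 0) := by
  intro h
  have hfin := eventually_cofinite.1 ((tendsto_zero_iff_norm_tendsto_zero.1 h).eventually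
    (gt_mem_nhds one_pos))
  refine infinite_range_of_injective (diagPow_injective hd) (hfin.subset ?_)
  rintro _ ⟨i, rfl⟩
  simp [sparseSeq]

end MorreySequence

open MorreySequence

theorem morrey00_subset_morrey0_subset_morrey (d : ℕ) (hd : 0 < d) (u p : ℝ)
    (hp : 0 < p) (hpu : p < u) :
    (∀ lam : (Fin d → ℤ) → ℂ, MemMorrey00 d u p lam →
        MemMorrey d u p lam ∧ Tendsto lam cofinite (nhds 0)) ∧
    (∃ lam : (Fin d → ℤ) → ℂ,
        (MemMorrey d u p lam ∧ Tendsto lam cofinite (nhds 0)) ∧ ¬ MemMorrey00 d u p lam) ∧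
    (∃ lam : (Fin d → ℤ) → ℂ,
        MemMorrey d u p lam ∧ ¬ (MemMorrey d u p lam ∧ Tendsto lam cofinite (nhds 0))) ∧
    (∀ lam : (Fin d → ℤ) → ℂ, MemMorrey d u p lam →
      (∀ ε : ℝ≥0∞, 0 < ε → ∃ mu : (Fin d → ℤ) → ℂ,
          (MemMorrey d u p mu ∧ Tendsto mu cofinite (nhds 0)) ∧
          morreyNorm d u p (lam - mu) < ε) →
      MemMorrey d u p lam ∧ Tendsto lam cofinite (nhds 0)) ∧
    (∀ lam : (Fin d → ℤ) → ℂ, MemMorrey d u p lam →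
      (∀ ε : ℝ≥0∞, 0 < ε → ∃ mu : (Fin d → ℤ) → ℂ,
          MemMorrey00 d u p mu ∧ morreyNorm d u p (lam - mu) < ε) →
      MemMorrey00 d u p lam) := by
  obtain ⟨C, hC, hadd⟩ := exists_morreyNorm_add_le d u hp
  refine ⟨fun lam ⟨hmem, happrox⟩ => ⟨hmem, ?_⟩, ?_, ?_, fun lam hmem happrox => ⟨hmem, ?_⟩,
    fun lam hmem happrox => ⟨hmem, ?_⟩⟩
  · exact tendsto_zero_of_approxBy hp (ApproxBy.mono happrox fun _ hfin =>
      tendsto_nhds_of_eventually_eq (eventually_cofinite.2 hfin))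
  · exact ⟨blockSeq d u, ⟨memMorrey_blockSeq hd hp hpu, tendsto_blockSeq hd (hp.trans hpu)⟩,
      not_memMorrey00_blockSeq hd u hp⟩
  · exact ⟨sparseSeq d, memMorrey_sparseSeq hd hp hpu, fun h => not_tendsto_sparseSeq hd h.2⟩
  · exact tendsto_zero_of_approxBy hp (ApproxBy.mono happrox fun _ h => h.2)
  · exact ApproxBy.of_approxBy hC hadd (ApproxBy.mono happrox fun _ h => h.2)
end

section
/- Let $0<p<u<\infty$ and let $\lambda\in m^{00}_{u,p}(\mathbb{Z}^d)$, the closure of the finitely supported sequences in $m_{u,p}(\mathbb{Z}^d)$. Then the supremum defining the norm is attained: there exists a dyadic cube $Q(\lambda)=Q_{-j_0,m_0}$ (with $j_0\in\mathbb{N}_0$, $m_0\in\mathbb{Z}^d$) such that $\|\lambda\,|\,m_{u,p}\| = |Q(\lambda)|^{1/u-1/p}\big(\sum_{k:\,Q_{0,k}\subset Q(\lambda)}|\lambda_k|^p\big)^{1/p}$. -/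
open scoped ENNReal NNReal BigOperators
open Filter

/-!
For `λ ∈ m^{00}_{u,p}` the terms `|Q|^{1/u-1/p} ‖λ|_Q‖_p` of the supremum tend to zero along the
cofinite filter on the dyadic cubes `Q`. For finitely supported sequences this holds because such a
sequence meets only finitely many cubes of each size, while `p < u` makes the factor
`|Q|^{1/u-1/p}` decay as the cubes grow; it passes to the closure by the quasi-triangle inequality.
A family in `ℝ≥0∞` tending to zero cofinitely attains its supremum. In dimension `0` there is only
one unit cube, so all terms coincide.
-/

open Set Topology

theorem exists_eq_iSup_of_tendsto_cofinite_bot {ι α : Type*} [Nonempty ι] [CompleteLinearOrder α]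
    [TopologicalSpace α] [OrderTopology α] {f : ι → α} (hf : Tendsto f cofinite (𝓝 ⊥)) :
    ∃ i, f i = ⨆ i, f i := by
  rcases eq_bot_or_bot_lt (⨆ i, f i) with hbot | hpos
  · obtain ⟨i⟩ := ‹Nonempty ι›
    exact ⟨i, le_antisymm (le_iSup f i) (hbot ▸ bot_le)⟩
  obtain ⟨i₀, hi₀⟩ := lt_iSup_iff.1 hpos
  have hfin : {i | f i₀ ≤ f i}.Finite := by
    simpa using eventually_cofinite.1 (hf.eventually (Iio_mem_nhds hi₀))
  obtain ⟨i, hi, hmax⟩ := exists_max_image _ f hfin ⟨i₀, le_rfl⟩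
  refine ⟨i, le_antisymm (le_iSup f i) (iSup_le fun j => ?_)⟩
  by_cases hj : f i₀ ≤ f j
  · exact hmax j hj
  · exact (not_le.1 hj).le.trans hi

namespace ENNReal

theorem rpow_add_le_two_rpow_mul_rpow_add_rpow (a b : ℝ≥0∞) {r : ℝ} (hr : 0 ≤ r) :
    (a + b) ^ r ≤ 2 ^ r * (a ^ r + b ^ r) :=
  calc (a + b) ^ r ≤ (2 * max a b) ^ r := by
        gcongr
        rw [two_mul]
        exact add_le_add (le_max_left a b) (le_max_right a b)
    _ = 2 ^ r * max a b ^ r := mul_rpow_of_nonneg _ _ hr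
    _ ≤ 2 ^ r * (a ^ r + b ^ r) := by
        gcongr
        rcases le_total a b with h | h
        · rw [max_eq_right h]; exact le_add_self
        · rw [max_eq_left h]; exact le_self_add

theorem tsum_add_rpow_rpow_le {κ : Type*} (f g : κ → ℝ≥0∞) {p : ℝ} (hp : 0 < p) :
    (∑' k, (f k + g k) ^ p) ^ (1 / p) ≤
      2 * 2 ^ (1 / p) * ((∑' k, f k ^ p) ^ (1 / p) + (∑' k, g k ^ p) ^ (1 / p)) := by
  have hp' : 0 ≤ 1 / p := by positivity
  calc (∑' k, (f k + g k) ^ p) ^ (1 / p)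
      ≤ (2 ^ p * (∑' k, f k ^ p + ∑' k, g k ^ p)) ^ (1 / p) := by
        rw [← ENNReal.tsum_add, ← ENNReal.tsum_mul_left]
        gcongr with k
        exact rpow_add_le_two_rpow_mul_rpow_add_rpow _ _ hp.le
    _ = 2 * (∑' k, f k ^ p + ∑' k, g k ^ p) ^ (1 / p) := by
        rw [mul_rpow_of_nonneg _ _ hp', ← rpow_mul, mul_one_div_cancel hp.ne', rpow_one]
    _ ≤ 2 * (2 ^ (1 / p) * ((∑' k, f k ^ p) ^ (1 / p) + (∑' k, g k ^ p) ^ (1 / p))) := by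
        gcongr
        exact rpow_add_le_two_rpow_mul_rpow_add_rpow _ _ hp'
    _ = _ := (mul_assoc _ _ _).symm

end ENNReal

theorem inDyadic.eq_ediv {d j : ℕ} {m k : Fin d → ℤ} (h : inDyadic d j m k) :
    m = fun i => k i / 2 ^ j := by
  funext i
  obtain ⟨hlo, hhi⟩ := h i
  have hpos : (0 : ℤ) < 2 ^ j := by positivity
  have hlt : k i / 2 ^ j < m i + 1 := (Int.ediv_lt_iff_lt_mul hpos).2 (by linarith)
  have hge : m i ≤ k i / 2 ^ j := (Int.le_ediv_iff_mul_le hpos).2 (by linarith)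
  omega

noncomputable def morreyTerm (d : ℕ) (u p : ℝ) (f : (Fin d → ℤ) → ℂ) (j : ℕ) (m : Fin d → ℤ) :
    ℝ≥0∞ :=
  ((2 : ℝ≥0∞) ^ (j * d)) ^ (1 / u - 1 / p) *
    (∑' k : {k : Fin d → ℤ // inDyadic d j m k}, (‖f k.1‖₊ : ℝ≥0∞) ^ p) ^ (1 / p)

section MorreyTerm

variable {d : ℕ} {u p : ℝ}

theorem morreyNorm_eq_iSup_morreyTerm (f : (Fin d → ℤ) → ℂ) :
    morreyNorm d u p f = ⨆ q : ℕ × (Fin d → ℤ), morreyTerm d u p f q.1 q.2 :=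
  (iSup_prod (f := fun q : ℕ × (Fin d → ℤ) => morreyTerm d u p f q.1 q.2)).symm

theorem morreyTerm_le_morreyNorm (f : (Fin d → ℤ) → ℂ) (j : ℕ) (m : Fin d → ℤ) :
    morreyTerm d u p f j m ≤ morreyNorm d u p f :=
  le_iSup₂ (f := fun j m => morreyTerm d u p f j m) j m

theorem morreyTerm_add_le (hp : 0 < p) (f g : (Fin d → ℤ) → ℂ) (j : ℕ) (m : Fin d → ℤ) :
    morreyTerm d u p (f + g) j m ≤
      2 * 2 ^ (1 / p) * (morreyTerm d u p f j m + morreyTerm d u p g j m) := by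
  unfold morreyTerm
  calc _ ≤ ((2 : ℝ≥0∞) ^ (j * d)) ^ (1 / u - 1 / p) *
          (∑' k : {k : Fin d → ℤ // inDyadic d j m k},
            ((‖f k.1‖₊ : ℝ≥0∞) + ‖g k.1‖₊) ^ p) ^ (1 / p) := by
        gcongr with k
        exact_mod_cast nnnorm_add_le _ _
    _ ≤ ((2 : ℝ≥0∞) ^ (j * d)) ^ (1 / u - 1 / p) * (2 * 2 ^ (1 / p) *
          ((∑' k : {k : Fin d → ℤ // inDyadic d j m k}, (‖f k.1‖₊ : ℝ≥0∞) ^ p) ^ (1 / p) +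
            (∑' k : {k : Fin d → ℤ // inDyadic d j m k}, (‖g k.1‖₊ : ℝ≥0∞) ^ p) ^ (1 / p))) := by
        gcongr
        exact ENNReal.tsum_add_rpow_rpow_le _ _ hp
    _ = _ := by ring

theorem morreyTerm_le_pow_mul (hp : 0 < p) (f : (Fin d → ℤ) → ℂ) (j : ℕ) (m : Fin d → ℤ) :
    morreyTerm d u p f j m ≤
      (((2 : ℝ≥0∞) ^ d) ^ (1 / u - 1 / p)) ^ j * (∑' k, (‖f k‖₊ : ℝ≥0∞) ^ p) ^ (1 / p) := by
  have hpref : ((2 : ℝ≥0∞) ^ (j * d)) ^ (1 / u - 1 / p) = (((2 : ℝ≥0∞) ^ d) ^ (1 / u - 1 / p)) ^ j := by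
    rw [mul_comm j d, pow_mul, ← ENNReal.rpow_natCast _ j, ← ENNReal.rpow_mul, mul_comm,
      ENNReal.rpow_mul, ENNReal.rpow_natCast]
  rw [morreyTerm, hpref]
  gcongr
  exact ENNReal.tsum_comp_le_tsum_of_injective Subtype.val_injective _

theorem mem_image_support_of_morreyTerm_ne_zero (hp : 0 < p) {f : (Fin d → ℤ) → ℂ} {j : ℕ}
    {m : Fin d → ℤ} (h : morreyTerm d u p f j m ≠ 0) :
    m ∈ (fun k i => k i / 2 ^ j) '' Function.support f := by
  contrapose! h
  have hzero : ∀ k : {k : Fin d → ℤ // inDyadic d j m k}, (‖f k.1‖₊ : ℝ≥0∞) ^ p = 0 := by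
    intro ⟨k, hk⟩
    have hfk : f k = 0 := by_contra fun hfk => h ⟨k, hfk, hk.eq_ediv.symm⟩
    simp [hfk, ENNReal.zero_rpow_of_pos hp]
  rw [morreyTerm, ENNReal.tsum_eq_zero.2 hzero, ENNReal.zero_rpow_of_pos (by positivity),
    mul_zero]

theorem tendsto_morreyTerm_cofinite_of_finite_support (hd : 0 < d) (hp : 0 < p) (hpu : p < u)
    {f : (Fin d → ℤ) → ℂ} (hf : (Function.support f).Finite) :
    Tendsto (fun q : ℕ × (Fin d → ℤ) => morreyTerm d u p f q.1 q.2) cofinite (𝓝 0) := by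
  have hM : ∑' k, (‖f k‖₊ : ℝ≥0∞) ^ p ≠ ⊤ := by
    rw [tsum_eq_sum (s := hf.toFinset) fun k hk => by simp_all [ENNReal.zero_rpow_of_pos hp]]
    exact ENNReal.sum_ne_top.2 fun k _ => ENNReal.rpow_ne_top_of_nonneg hp.le ENNReal.coe_ne_top
  set c : ℝ≥0∞ := ((2 : ℝ≥0∞) ^ d) ^ (1 / u - 1 / p)
  set M : ℝ≥0∞ := ∑' k, (‖f k‖₊ : ℝ≥0∞) ^ p
  have hc : c < 1 := by
    refine ENNReal.rpow_lt_one_of_one_lt_of_neg (one_lt_pow' (by norm_num) hd.ne') ?_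
    linarith [one_div_lt_one_div_of_lt hp hpu]
  have hdecay : Tendsto (fun j : ℕ => c ^ j * M ^ (1 / p)) atTop (𝓝 0) := by
    simpa using ENNReal.Tendsto.mul_const (ENNReal.tendsto_pow_atTop_nhds_zero_of_lt_one hc)
      (Or.inr (ENNReal.rpow_ne_top_of_nonneg (by positivity) hM))
  refine ENNReal.tendsto_nhds_zero.2 fun ε hε => ?_
  obtain ⟨J, hJ⟩ := eventually_atTop.1 (hdecay.eventually (Iic_mem_nhds hε))
  refine eventually_cofinite.2 (((finite_Iio J).prod ((finite_Iio J).biUnion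
    fun j _ => hf.image fun k i => k i / 2 ^ j)).subset ?_)
  rintro ⟨j, m⟩ hjm
  have hj : j < J := by
    by_contra! hJj
    exact hjm ((morreyTerm_le_pow_mul hp f j m).trans (hJ j hJj))
  have hne : morreyTerm d u p f j m ≠ 0 := (zero_le.trans_lt (not_le.1 hjm)).ne'
  exact ⟨hj, mem_biUnion hj (mem_image_support_of_morreyTerm_ne_zero hp hne)⟩

theorem tendsto_morreyTerm_cofinite (hd : 0 < d) (hp : 0 < p) (hpu : p < u)
    {f : (Fin d → ℤ) → ℂ} (hf : MemMorrey00 d u p f) :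
    Tendsto (fun q : ℕ × (Fin d → ℤ) => morreyTerm d u p f q.1 q.2) cofinite (𝓝 0) := by
  set C : ℝ≥0∞ := 2 * 2 ^ (1 / p)
  have hC0 : C ≠ 0 := mul_ne_zero two_ne_zero (by simp [ENNReal.rpow_eq_zero_iff])
  have hCtop : C ≠ ⊤ := ENNReal.mul_ne_top ENNReal.ofNat_ne_top
    (ENNReal.rpow_ne_top_of_nonneg (by positivity) ENNReal.ofNat_ne_top)
  refine ENNReal.tendsto_nhds_zero.2 fun ε hε => ?_
  set δ := ε / 2 / C
  have hδ : 0 < δ := ENNReal.div_pos (ENNReal.half_pos hε.ne').ne' hCtop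
  obtain ⟨μ, hμ, hdist⟩ := hf.2 δ hδ
  filter_upwards [ENNReal.tendsto_nhds_zero.1
    (tendsto_morreyTerm_cofinite_of_finite_support hd hp hpu hμ) δ hδ] with q hq
  calc morreyTerm d u p f q.1 q.2 = morreyTerm d u p (μ + (f - μ)) q.1 q.2 := by
        rw [add_sub_cancel]
    _ ≤ C * (morreyTerm d u p μ q.1 q.2 + morreyTerm d u p (f - μ) q.1 q.2) :=
        morreyTerm_add_le hp _ _ _ _
    _ ≤ C * (δ + δ) := by
        gcongr
        exact (morreyTerm_le_morreyNorm _ _ _).trans hdist.le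
    _ = ε := by rw [mul_add, ENNReal.mul_div_cancel hC0 hCtop, ENNReal.add_halves]

theorem morreyTerm_dim_zero (f : (Fin 0 → ℤ) → ℂ) (j : ℕ) (m : Fin 0 → ℤ) :
    morreyTerm 0 u p f j m = morreyTerm 0 u p f 0 0 := by
  simp only [morreyTerm, mul_zero]
  congr 2
  exact (Equiv.subtypeEquivRight fun k => show inDyadic 0 j m k ↔ inDyadic 0 0 0 k from
    ⟨fun _ => finZeroElim, fun _ => finZeroElim⟩).tsum_eq fun k => (‖f k.1‖₊ : ℝ≥0∞) ^ p

end MorreyTerm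

theorem morrey00_norm_attained (d : ℕ) (u p : ℝ) (hp : 0 < p) (hpu : p < u)
    (lam : (Fin d → ℤ) → ℂ) (hlam : MemMorrey00 d u p lam) :
    ∃ (j₀ : ℕ) (m₀ : Fin d → ℤ),
      morreyNorm d u p lam =
        ((2 : ℝ≥0∞) ^ (j₀ * d)) ^ (1 / u - 1 / p) *
          (∑' k : {k : Fin d → ℤ // inDyadic d j₀ m₀ k}, (‖lam k.1‖₊ : ℝ≥0∞) ^ p) ^ (1 / p) := by
  change ∃ j₀ m₀, morreyNorm d u p lam = morreyTerm d u p lam j₀ m₀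
  rw [morreyNorm_eq_iSup_morreyTerm]
  rcases Nat.eq_zero_or_pos d with rfl | hd
  · exact ⟨0, 0, by simp only [morreyTerm_dim_zero, iSup_const]⟩
  · obtain ⟨⟨j₀, m₀⟩, h⟩ :=
      exists_eq_iSup_of_tendsto_cofinite_bot (tendsto_morreyTerm_cofinite hd hp hpu hlam)
    exact ⟨j₀, m₀, h.symm⟩
end

section
/- Let $0<p<u<\infty$, and let $\{w^{(n)}\}_{n\in\mathbb{N}}$ be a sequence in $m^{00}_{u,p}(\mathbb{Z}^d)$ converging weakly to zero. Then for every $\lambda\in m^{00}_{u,p}(\mathbb{Z}^d)$ one has $\limsup_{n\to\infty}\|\lambda+w^{(n)}\,|\,m_{u,p}\| = \max\big\{\|\lambda\,|\,m_{u,p}\|,\ \limsup_{n\to\infty}\|w^{(n)}\,|\,m_{u,p}\|\big\}$. -/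
/-!
Put `q = min p 1`, so that `‖·‖^q` is subadditive on `m_{u,p}`. For finitely supported `μ` the
identity holds exactly. Since `p < u`, the terms of the norm of `μ` on large cubes are small, so
every dyadic cube either carries a negligible part of `μ`, or misses the support of `μ`, or lies in
a fixed finite set `G`; on `G` the sequence `w⁽ⁿ⁾` tends to zero, because weak convergence implies
pointwise convergence. This gives `‖μ + w⁽ⁿ⁾‖^q ≤ max(‖μ‖^q, ‖w⁽ⁿ⁾‖^q) + o(1)`, and splitting off
the support of `μ` gives the reverse inequality. Both sides of the identity are `1`-Lipschitz in
`λ` for the quasi-distance `‖λ - μ‖^q`, so it passes to the closure `m⁰⁰_{u,p}`.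
-/

open scoped ENNReal NNReal BigOperators
open Filter

open scoped Topology

theorem ENNReal.Lp_add_le_tsum {ι : Type*} (f g : ι → ℝ≥0∞) {r : ℝ} (hr : 1 ≤ r) :
    (∑' i, (f i + g i) ^ r) ^ (1 / r) ≤ (∑' i, f i ^ r) ^ (1 / r) + (∑' i, g i ^ r) ^ (1 / r) := by
  have hr0 : 0 < r := zero_lt_one.trans_le hr
  rw [one_div, ENNReal.rpow_inv_le_iff hr0, ENNReal.tsum_eq_iSup_sum]
  refine iSup_le fun s => ?_
  rw [← ENNReal.rpow_inv_le_iff hr0, ← one_div]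
  refine (ENNReal.Lp_add_le s f g hr).trans ?_
  gcongr <;> exact ENNReal.sum_le_tsum s

theorem ENNReal.Lp_rpow_min_add_le_tsum {ι : Type*} {p : ℝ} (hp : 0 < p) (f g : ι → ℝ≥0∞) :
    ((∑' i, (f i + g i) ^ p) ^ (1 / p)) ^ min p 1 ≤
      ((∑' i, f i ^ p) ^ (1 / p)) ^ min p 1 + ((∑' i, g i ^ p) ^ (1 / p)) ^ min p 1 := by
  rcases le_total p 1 with hp1 | hp1
  · simp only [min_eq_left hp1, one_div, ENNReal.rpow_inv_rpow hp.ne']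
    rw [← ENNReal.tsum_add]
    exact ENNReal.tsum_le_tsum fun i => ENNReal.rpow_add_le_add_rpow _ _ hp.le hp1
  · simpa only [min_eq_right hp1, ENNReal.rpow_one] using ENNReal.Lp_add_le_tsum f g hp1

namespace Morrey

variable {d : ℕ} {u p : ℝ}

local notation "𝒩" x:max => morreyNorm d u p x ^ min p 1

noncomputable def morreyTerm (d : ℕ) (u p : ℝ) (x : (Fin d → ℤ) → ℂ) (j : ℕ) (m : Fin d → ℤ) :
    ℝ≥0∞ :=
  ((2 : ℝ≥0∞) ^ (j * d)) ^ (1 / u - 1 / p) *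
    (∑' k : {k : Fin d → ℤ // inDyadic d j m k}, (‖x k.1‖₊ : ℝ≥0∞) ^ p) ^ (1 / p)

theorem morreyTerm_le_morreyNorm (x : (Fin d → ℤ) → ℂ) (j : ℕ) (m : Fin d → ℤ) :
    morreyTerm d u p x j m ≤ morreyNorm d u p x :=
  le_iSup₂ (f := morreyTerm d u p x) j m

theorem morreyNorm_rpow_eq_iSup {r : ℝ} (hr : 0 < r) (x : (Fin d → ℤ) → ℂ) :
    morreyNorm d u p x ^ r = ⨆ (j : ℕ) (m : Fin d → ℤ), morreyTerm d u p x j m ^ r :=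
  (ENNReal.orderIsoRpow r hr).map_iSup₂ (morreyTerm d u p x)

theorem morreyTerm_congr {x y : (Fin d → ℤ) → ℂ} {j : ℕ} {m : Fin d → ℤ}
    (h : ∀ k, inDyadic d j m k → x k = y k) : morreyTerm d u p x j m = morreyTerm d u p y j m := by
  unfold morreyTerm
  congr 3 with k
  rw [h k.1 k.2]

theorem morreyTerm_mono (hp : 0 < p) {x y : (Fin d → ℤ) → ℂ} (h : ∀ k, ‖x k‖₊ ≤ ‖y k‖₊)
    (j : ℕ) (m : Fin d → ℤ) : morreyTerm d u p x j m ≤ morreyTerm d u p y j m := by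
  unfold morreyTerm
  gcongr with k
  exact h k.1

theorem morreyNorm_mono (hp : 0 < p) {x y : (Fin d → ℤ) → ℂ} (h : ∀ k, ‖x k‖₊ ≤ ‖y k‖₊) :
    morreyNorm d u p x ≤ morreyNorm d u p y :=
  iSup₂_mono (morreyTerm_mono hp h)

theorem morreyNorm_indicator_le (hp : 0 < p) (s : Set (Fin d → ℤ)) (x : (Fin d → ℤ) → ℂ) :
    morreyNorm d u p (s.indicator x) ≤ morreyNorm d u p x :=
  morreyNorm_mono hp fun k => norm_indicator_le_norm_self x k

@[simp]
theorem morreyNorm_neg (x : (Fin d → ℤ) → ℂ) : morreyNorm d u p (-x) = morreyNorm d u p x := by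
  simp only [morreyNorm, Pi.neg_apply, nnnorm_neg]

theorem morreyNorm_sub_comm (x y : (Fin d → ℤ) → ℂ) :
    morreyNorm d u p (x - y) = morreyNorm d u p (y - x) := by
  rw [← neg_sub, morreyNorm_neg]

theorem nnnorm_le_morreyNorm (hp : 0 < p) (x : (Fin d → ℤ) → ℂ) (k : Fin d → ℤ) :
    (‖x k‖₊ : ℝ≥0∞) ≤ morreyNorm d u p x := by
  have hk : inDyadic d 0 k k := fun i => by simp
  calc (‖x k‖₊ : ℝ≥0∞) = ((‖x k‖₊ : ℝ≥0∞) ^ p) ^ (1 / p) := by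
        rw [one_div, ENNReal.rpow_rpow_inv hp.ne']
    _ ≤ morreyTerm d u p x 0 k := by
        simp only [morreyTerm, zero_mul, pow_zero, ENNReal.one_rpow, one_mul]
        gcongr
        exact ENNReal.le_tsum (f := fun k' : {k' // inDyadic d 0 k k'} => (‖x k'.1‖₊ : ℝ≥0∞) ^ p)
          ⟨k, hk⟩
    _ ≤ morreyNorm d u p x := morreyTerm_le_morreyNorm x 0 k

theorem morreyTerm_add_rpow_le (hp : 0 < p) (x y : (Fin d → ℤ) → ℂ) (j : ℕ) (m : Fin d → ℤ) :
    morreyTerm d u p (x + y) j m ^ min p 1 ≤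
      morreyTerm d u p x j m ^ min p 1 + morreyTerm d u p y j m ^ min p 1 := by
  have hq : 0 ≤ min p 1 := (lt_min hp one_pos).le
  simp only [morreyTerm, ENNReal.mul_rpow_of_nonneg _ _ hq, ← mul_add]
  gcongr
  refine le_trans ?_ (ENNReal.Lp_rpow_min_add_le_tsum hp _ _)
  gcongr with k
  exact_mod_cast nnnorm_add_le (x k.1) (y k.1)

theorem morreyNorm_add_rpow_le (hp : 0 < p) (x y : (Fin d → ℤ) → ℂ) :
    𝒩 (x + y) ≤ 𝒩 x + 𝒩 y := by
  rw [morreyNorm_rpow_eq_iSup (lt_min hp one_pos)]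
  refine iSup₂_le fun j m => (morreyTerm_add_rpow_le hp x y j m).trans ?_
  gcongr <;> exact morreyTerm_le_morreyNorm _ j m

theorem morreyNorm_sub_rpow_le (hp : 0 < p) (x y : (Fin d → ℤ) → ℂ) :
    𝒩 (x - y) ≤ 𝒩 x + 𝒩 y := by
  simpa [sub_eq_add_neg] using morreyNorm_add_rpow_le hp x (-y)

theorem morreyTerm_le_mul_lpNorm (hp : 0 < p) (x : (Fin d → ℤ) → ℂ) (j : ℕ) (m : Fin d → ℤ) :
    morreyTerm d u p x j m ≤ ((2 : ℝ≥0∞) ^ (j * d)) ^ (1 / u - 1 / p) * lpNorm d p x := by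
  unfold morreyTerm lpNorm
  gcongr
  exact ENNReal.tsum_comp_le_tsum_of_injective Subtype.val_injective _

theorem morreyNorm_le_lpNorm (hp : 0 < p) (hpu : p ≤ u) (x : (Fin d → ℤ) → ℂ) :
    morreyNorm d u p x ≤ lpNorm d p x := by
  refine iSup₂_le fun j m => (morreyTerm_le_mul_lpNorm hp x j m).trans ?_
  refine mul_le_of_le_one_left zero_le ?_
  calc ((2 : ℝ≥0∞) ^ (j * d)) ^ (1 / u - 1 / p) ≤ ((2 : ℝ≥0∞) ^ (j * d)) ^ (0 : ℝ) :=
        ENNReal.rpow_le_rpow_of_exponent_le (one_le_pow₀ one_le_two)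
          (sub_nonpos.2 (one_div_le_one_div_of_le hp hpu))
    _ = 1 := ENNReal.rpow_zero

theorem lpNorm_indicator_eq (hp : 0 < p) {s : Set (Fin d → ℤ)} (hs : s.Finite)
    (x : (Fin d → ℤ) → ℂ) :
    lpNorm d p (s.indicator x) = (∑ k ∈ hs.toFinset, (‖x k‖₊ : ℝ≥0∞) ^ p) ^ (1 / p) := by
  unfold lpNorm
  congr 1
  rw [tsum_eq_sum (s := hs.toFinset) fun k hk => ?_]
  · exact Finset.sum_congr rfl fun k hk => by rw [Set.indicator_of_mem (hs.mem_toFinset.1 hk)]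
  · rw [Set.indicator_of_notMem (by simpa using hk)]
    simp [hp]

theorem lpNorm_ne_top_of_finite_support (hp : 0 < p) {x : (Fin d → ℤ) → ℂ}
    (hx : (Function.support x).Finite) : lpNorm d p x ≠ ⊤ := by
  rw [← Set.indicator_support (f := x), lpNorm_indicator_eq hp hx]
  refine ENNReal.rpow_ne_top_of_nonneg (by positivity) ?_
  exact ENNReal.sum_ne_top.2 fun k _ => ENNReal.rpow_ne_top_of_nonneg hp.le ENNReal.coe_ne_top

theorem tendsto_morreyNorm_indicator_rpow (hp : 0 < p) (hpu : p ≤ u) {s : Set (Fin d → ℤ)}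
    (hs : s.Finite) {w : ℕ → (Fin d → ℤ) → ℂ} (hw : ∀ k, Tendsto (fun n => w n k) atTop (𝓝 0)) :
    Tendsto (fun n => 𝒩 (s.indicator (w n))) atTop (𝓝 0) := by
  have hcoord : ∀ k, Tendsto (fun n => (‖w n k‖₊ : ℝ≥0∞) ^ p) atTop (𝓝 0) := fun k => by
    simpa [hp] using (ENNReal.tendsto_coe.2 ((hw k).nnnorm)).ennrpow_const p
  have hlp : Tendsto (fun n => lpNorm d p (s.indicator (w n))) atTop (𝓝 0) := by
    simp only [lpNorm_indicator_eq hp hs]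
    simpa [hp] using (tendsto_finsetSum hs.toFinset fun k _ => hcoord k).ennrpow_const (1 / p)
  have hmorrey : Tendsto (fun n => morreyNorm d u p (s.indicator (w n))) atTop (𝓝 0) :=
    tendsto_of_tendsto_of_tendsto_of_le_of_le tendsto_const_nhds hlp (fun _ => zero_le)
      fun n => morreyNorm_le_lpNorm hp hpu _
  simpa [hp] using hmorrey.ennrpow_const (min p 1)

theorem dist_le_of_inDyadic {j : ℕ} {m k k' : Fin d → ℤ} (hk : inDyadic d j m k)
    (hk' : inDyadic d j m k') : dist k k' ≤ 2 ^ j := by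
  refine (dist_pi_le_iff (by positivity)).2 fun i => ?_
  obtain ⟨hk1, hk2⟩ := hk i
  obtain ⟨hk'1, hk'2⟩ := hk' i
  have : |k i - k' i| ≤ 2 ^ j := abs_sub_le_iff.2 ⟨by linarith, by linarith⟩
  rw [Int.dist_eq']
  exact_mod_cast this

theorem exists_finite_forall_inDyadic_mem {S : Set (Fin d → ℤ)} (hS : S.Finite) (N : ℕ) :
    ∃ G : Set (Fin d → ℤ), G.Finite ∧ ∀ j ≤ N, ∀ m k₀ k, k₀ ∈ S →
      inDyadic d j m k₀ → inDyadic d j m k → k ∈ G := by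
  refine ⟨⋃ k₀ ∈ S, Metric.closedBall k₀ (2 ^ N),
    hS.biUnion fun k₀ _ => (isCompact_closedBall k₀ _).finite_of_discrete, ?_⟩
  intro j hj m k₀ k hk₀S hk₀ hk
  exact Set.mem_biUnion hk₀S ((dist_le_of_inDyadic hk hk₀).trans (pow_le_pow_right₀ one_le_two hj))

theorem exists_forall_morreyTerm_le (hd : 0 < d) (hp : 0 < p) (hpu : p < u)
    {x : (Fin d → ℤ) → ℂ} (hx : lpNorm d p x ≠ ⊤) {ε : ℝ≥0∞} (hε : 0 < ε) :
    ∃ N, ∀ j ≥ N, ∀ m, morreyTerm d u p x j m ≤ ε := by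
  set W := ((2 : ℝ≥0∞) ^ d) ^ (1 / u - 1 / p)
  have hweight : ∀ j : ℕ, ((2 : ℝ≥0∞) ^ (j * d)) ^ (1 / u - 1 / p) = W ^ j := fun j => by
    rw [pow_mul', ← ENNReal.rpow_natCast _ j, ← ENNReal.rpow_mul, mul_comm, ENNReal.rpow_mul,
      ENNReal.rpow_natCast]
  have hW : W < 1 := ENNReal.rpow_lt_one_of_one_lt_of_neg
    (ENNReal.one_lt_two.trans_le (le_self_pow₀ one_le_two hd.ne'))
    (sub_neg.2 (one_div_lt_one_div_of_lt hp hpu))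
  have hlim : Tendsto (fun j : ℕ => W ^ j * lpNorm d p x) atTop (𝓝 0) := by
    simpa using ENNReal.Tendsto.mul_const (ENNReal.tendsto_pow_atTop_nhds_zero_of_lt_one hW)
      (Or.inr hx)
  obtain ⟨N, hN⟩ := ENNReal.tendsto_atTop_zero.1 hlim ε hε
  exact ⟨N, fun j hj m => (morreyTerm_le_mul_lpNorm hp x j m).trans (hweight j ▸ hN j hj)⟩

theorem exists_finite_cube_trichotomy (hp : 0 < p) (hpu : p < u) {μ : (Fin d → ℤ) → ℂ}
    (hμ : (Function.support μ).Finite) {ε : ℝ≥0∞} (hε : 0 < ε) :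
    ∃ G : Set (Fin d → ℤ), G.Finite ∧ ∀ j m, morreyTerm d u p μ j m ≤ ε ∨
      (∀ k, inDyadic d j m k → k ∈ G) ∨ ∀ k, inDyadic d j m k → μ k = 0 := by
  rcases Nat.eq_zero_or_pos d with rfl | hd
  · exact ⟨Set.univ, Set.finite_univ, fun j m => Or.inr (Or.inl fun k _ => Set.mem_univ k)⟩
  obtain ⟨N, hN⟩ := exists_forall_morreyTerm_le hd hp hpu (lpNorm_ne_top_of_finite_support hp hμ) hε
  obtain ⟨G, hG, hGmem⟩ := exists_finite_forall_inDyadic_mem hμ N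
  refine ⟨G, hG, fun j m => ?_⟩
  rcases le_total N j with hNj | hjN
  · exact Or.inl (hN j hNj m)
  by_cases hmeet : ∃ k₀, inDyadic d j m k₀ ∧ μ k₀ ≠ 0
  · obtain ⟨k₀, hk₀, hμk₀⟩ := hmeet
    exact Or.inr (Or.inl fun k hk => hGmem j hjN m k₀ k hμk₀ hk₀ hk)
  · push Not at hmeet
    exact Or.inr (Or.inr hmeet)

theorem morreyNorm_add_rpow_le_max (hp : 0 < p) {μ : (Fin d → ℤ) → ℂ} (σ : (Fin d → ℤ) → ℂ)
    {G : Set (Fin d → ℤ)} {ε : ℝ≥0∞}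
    (hG : ∀ j m, morreyTerm d u p μ j m ≤ ε ∨
      (∀ k, inDyadic d j m k → k ∈ G) ∨ ∀ k, inDyadic d j m k → μ k = 0) :
    𝒩 (μ + σ) ≤ max (𝒩 μ) (𝒩 σ) + ε ^ min p 1 + 𝒩 (G.indicator σ) := by
  have hq : 0 < min p 1 := lt_min hp one_pos
  have hterm : ∀ x j m, morreyTerm d u p x j m ^ min p 1 ≤ 𝒩 x :=
    fun x j m => ENNReal.rpow_le_rpow (morreyTerm_le_morreyNorm x j m) hq.le
  rw [morreyNorm_rpow_eq_iSup hq]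
  refine iSup₂_le fun j m => ?_
  rcases hG j m with hsmall | hinG | hzero
  · calc morreyTerm d u p (μ + σ) j m ^ min p 1
        ≤ morreyTerm d u p μ j m ^ min p 1 + morreyTerm d u p σ j m ^ min p 1 :=
          morreyTerm_add_rpow_le hp μ σ j m
      _ ≤ ε ^ min p 1 + max (𝒩 μ) (𝒩 σ) :=
          add_le_add (ENNReal.rpow_le_rpow hsmall hq.le) ((hterm σ j m).trans (le_max_right _ _))
      _ ≤ _ := by rw [add_comm]; exact le_self_add
  · rw [morreyTerm_congr fun k hk => show (μ + σ) k = (μ + G.indicator σ) k by simp [hinG k hk]]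
    calc morreyTerm d u p (μ + G.indicator σ) j m ^ min p 1
        ≤ morreyTerm d u p μ j m ^ min p 1 + morreyTerm d u p (G.indicator σ) j m ^ min p 1 :=
          morreyTerm_add_rpow_le hp μ _ j m
      _ ≤ 𝒩 μ + 𝒩 (G.indicator σ) := add_le_add (hterm μ j m) (hterm _ j m)
      _ ≤ _ := by gcongr; exact (le_max_left _ _).trans le_self_add
  · rw [morreyTerm_congr fun k hk => show (μ + σ) k = σ k by simp [hzero k hk]]
    exact (hterm σ j m).trans ((le_max_right _ _).trans (le_self_add.trans le_self_add))

theorem max_morreyNorm_rpow_le (hp : 0 < p) {μ σ : (Fin d → ℤ) → ℂ} {F : Set (Fin d → ℤ)}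
    (hF : Function.support μ ⊆ F) :
    max (𝒩 μ) (𝒩 σ) ≤ 𝒩 (μ + σ) + 𝒩 (F.indicator σ) := by
  refine max_le ?_ ?_
  · have hμ : F.indicator (μ + σ) - F.indicator σ = μ := by
      rw [Set.indicator_add', add_sub_cancel_right, Set.indicator_eq_self.2 hF]
    calc 𝒩 μ = 𝒩 (F.indicator (μ + σ) - F.indicator σ) := by rw [hμ]
      _ ≤ 𝒩 (F.indicator (μ + σ)) + 𝒩 (F.indicator σ) := morreyNorm_sub_rpow_le hp _ _
      _ ≤ _ := by gcongr; exact morreyNorm_indicator_le hp F _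
  · have hσ : Fᶜ.indicator (μ + σ) + F.indicator σ = σ := by
      rw [Set.indicator_add', Set.indicator_eq_zero'.2 (disjoint_compl_right.mono_left hF),
        zero_add, Set.indicator_compl_add_self]
    calc 𝒩 σ = 𝒩 (Fᶜ.indicator (μ + σ) + F.indicator σ) := by rw [hσ]
      _ ≤ 𝒩 (Fᶜ.indicator (μ + σ)) + 𝒩 (F.indicator σ) := morreyNorm_add_rpow_le hp _ _
      _ ≤ _ := by gcongr; exact morreyNorm_indicator_le hp Fᶜ _

theorem limsup_morreyNorm_add_rpow_of_finite_support (hp : 0 < p) (hpu : p < u)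
    {μ : (Fin d → ℤ) → ℂ} (hμ : (Function.support μ).Finite) {w : ℕ → (Fin d → ℤ) → ℂ}
    (hw : ∀ k, Tendsto (fun n => w n k) atTop (𝓝 0)) :
    limsup (fun n => 𝒩 (μ + w n)) atTop = max (𝒩 μ) (limsup (fun n => 𝒩 (w n)) atTop) := by
  have hq : 0 < min p 1 := lt_min hp one_pos
  have hmax : limsup (fun n => max (𝒩 μ) (𝒩 (w n))) atTop =
      max (𝒩 μ) (limsup (fun n => 𝒩 (w n)) atTop) := by
    rw [limsup_max, limsup_const]
  refine le_antisymm (ENNReal.le_of_forall_pos_le_add fun δ hδ _ => ?_) ?_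
  · obtain ⟨G, hG, htri⟩ := exists_finite_cube_trichotomy (u := u) hp hpu hμ
      (ε := (δ : ℝ≥0∞) ^ (min p 1)⁻¹) (ENNReal.rpow_pos (by simpa using hδ) ENNReal.coe_ne_top)
    calc limsup (fun n => 𝒩 (μ + w n)) atTop
        ≤ limsup ((fun n => max (𝒩 μ) (𝒩 (w n)) + δ) + fun n => 𝒩 (G.indicator (w n))) atTop :=
          limsup_le_limsup (.of_forall fun n => by
            simpa [ENNReal.rpow_inv_rpow hq.ne'] using morreyNorm_add_rpow_le_max hp (w n) htri)
      _ = limsup (fun n => max (𝒩 μ) (𝒩 (w n)) + δ) atTop :=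
          ENNReal.limsup_add_of_right_tendsto_zero
            (tendsto_morreyNorm_indicator_rpow hp hpu.le hG hw) _
      _ = _ := by rw [limsup_add_const _ _ _ (by isBoundedDefault) (by isBoundedDefault), hmax]
  · calc max (𝒩 μ) (limsup (fun n => 𝒩 (w n)) atTop)
        = limsup (fun n => max (𝒩 μ) (𝒩 (w n))) atTop := hmax.symm
      _ ≤ limsup ((fun n => 𝒩 (μ + w n)) +
            fun n => 𝒩 ((Function.support μ).indicator (w n))) atTop :=
          limsup_le_limsup (.of_forall fun n => max_morreyNorm_rpow_le hp subset_rfl)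
      _ = _ := ENNReal.limsup_add_of_right_tendsto_zero
            (tendsto_morreyNorm_indicator_rpow hp hpu.le hμ hw) _

theorem limsup_morreyNorm_add_rpow_le (hp : 0 < p) (x y : (Fin d → ℤ) → ℂ)
    (w : ℕ → (Fin d → ℤ) → ℂ) :
    limsup (fun n => 𝒩 (x + w n)) atTop ≤ 𝒩 (x - y) + limsup (fun n => 𝒩 (y + w n)) atTop := by
  rw [← limsup_const_add _ _ _ (by isBoundedDefault) (by isBoundedDefault)]
  refine limsup_le_limsup (.of_forall fun n => ?_)
  have hsplit : x - y + (y + w n) = x + w n := by abel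
  simpa only [hsplit] using morreyNorm_add_rpow_le hp (x - y) (y + w n)

theorem max_morreyNorm_rpow_le_add (hp : 0 < p) (x y : (Fin d → ℤ) → ℂ) (A : ℝ≥0∞) :
    max (𝒩 x) A ≤ 𝒩 (x - y) + max (𝒩 y) A := by
  refine max_le ?_ ((le_max_right _ _).trans le_add_self)
  calc 𝒩 x ≤ 𝒩 (x - y) + 𝒩 y := by
        simpa only [sub_add_cancel] using morreyNorm_add_rpow_le hp (x - y) y
    _ ≤ _ := by gcongr; exact le_max_left _ _

theorem limsup_morreyNorm_add_rpow (hp : 0 < p) (hpu : p < u) {x : (Fin d → ℤ) → ℂ}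
    (hx : MemMorrey00 d u p x) {w : ℕ → (Fin d → ℤ) → ℂ}
    (hw : ∀ k, Tendsto (fun n => w n k) atTop (𝓝 0)) :
    limsup (fun n => 𝒩 (x + w n)) atTop = max (𝒩 x) (limsup (fun n => 𝒩 (w n)) atTop) := by
  have hq : 0 < min p 1 := lt_min hp one_pos
  have happrox : ∀ η : ℝ≥0, 0 < η →
      limsup (fun n => 𝒩 (x + w n)) atTop ≤
        max (𝒩 x) (limsup (fun n => 𝒩 (w n)) atTop) + η + η ∧
      max (𝒩 x) (limsup (fun n => 𝒩 (w n)) atTop) ≤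
        limsup (fun n => 𝒩 (x + w n)) atTop + η + η := by
    intro η hη
    obtain ⟨μ, hμ, hxμ⟩ := hx.2 ((η : ℝ≥0∞) ^ (min p 1)⁻¹)
      (ENNReal.rpow_pos (by simpa using hη) ENNReal.coe_ne_top)
    have hxμ' : 𝒩 (x - μ) ≤ η := by
      simpa [ENNReal.rpow_inv_rpow hq.ne'] using ENNReal.rpow_le_rpow hxμ.le hq.le
    have hμx' : 𝒩 (μ - x) ≤ η := morreyNorm_sub_comm (u := u) x μ ▸ hxμ'
    have hμ_eq := limsup_morreyNorm_add_rpow_of_finite_support hp hpu hμ hw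
    constructor
    · calc _ ≤ 𝒩 (x - μ) + limsup (fun n => 𝒩 (μ + w n)) atTop :=
          limsup_morreyNorm_add_rpow_le hp x μ w
        _ ≤ η + (η + max (𝒩 x) (limsup (fun n => 𝒩 (w n)) atTop)) := by
          rw [hμ_eq]
          gcongr
          exact (max_morreyNorm_rpow_le_add hp μ x _).trans (by gcongr)
        _ = _ := by ring
    · calc _ ≤ 𝒩 (x - μ) + max (𝒩 μ) (limsup (fun n => 𝒩 (w n)) atTop) :=
          max_morreyNorm_rpow_le_add hp x μ _
        _ ≤ η + (η + limsup (fun n => 𝒩 (x + w n)) atTop) := by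
          rw [← hμ_eq]
          gcongr
          exact (limsup_morreyNorm_add_rpow_le hp μ x w).trans (by gcongr)
        _ = _ := by ring
  refine le_antisymm (ENNReal.le_of_forall_pos_le_add fun ε hε _ => ?_)
    (ENNReal.le_of_forall_pos_le_add fun ε hε _ => ?_)
  · simpa [add_assoc, ← ENNReal.coe_add] using (happrox (ε / 2) (half_pos hε)).1
  · simpa [add_assoc, ← ENNReal.coe_add] using (happrox (ε / 2) (half_pos hε)).2

end Morrey

theorem morrey00_weak_null_limsup_general (d : ℕ) (u p : ℝ) (hp : 0 < p) (hpu : p < u)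
    (w : ℕ → (Fin d → ℤ) → ℂ)
    (hweak : ∀ f : ((Fin d → ℤ) → ℂ) → ℂ,
      (∀ lam mu : (Fin d → ℤ) → ℂ, MemMorrey00 d u p lam → MemMorrey00 d u p mu →
        f (lam + mu) = f lam + f mu) →
      (∀ (c : ℂ) (lam : (Fin d → ℤ) → ℂ), MemMorrey00 d u p lam → f (c • lam) = c * f lam) →
      (∃ C : ℝ≥0∞, C ≠ ⊤ ∧ ∀ lam : (Fin d → ℤ) → ℂ, MemMorrey00 d u p lam →
        (‖f lam‖₊ : ℝ≥0∞) ≤ C * morreyNorm d u p lam) →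
      Tendsto (fun n => f (w n)) atTop (nhds 0))
    (lam : (Fin d → ℤ) → ℂ) (hlam : MemMorrey00 d u p lam) :
    Filter.limsup (fun n => morreyNorm d u p (lam + w n)) atTop =
      max (morreyNorm d u p lam) (Filter.limsup (fun n => morreyNorm d u p (w n)) atTop) := by
  have hpointwise : ∀ k, Tendsto (fun n => w n k) atTop (𝓝 0) := fun k =>
    hweak (fun x => x k) (fun _ _ _ _ => rfl) (fun _ _ _ => rfl)
      ⟨1, ENNReal.one_ne_top, fun x _ => by simpa using Morrey.nnnorm_le_morreyNorm hp x k⟩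
  let φ := ENNReal.orderIsoRpow (min p 1) (lt_min hp one_pos)
  apply φ.injective
  rw [φ.limsup_apply, φ.monotone.map_max, φ.limsup_apply]
  exact Morrey.limsup_morreyNorm_add_rpow hp hpu hlam hpointwise

theorem morrey00_weak_null_limsup (d : ℕ) (u p : ℝ) (hp : 0 < p) (hpu : p < u)
    (w : ℕ → (Fin d → ℤ) → ℂ) (hw : ∀ n, MemMorrey00 d u p (w n))
    (hweak : ∀ f : ((Fin d → ℤ) → ℂ) → ℂ,
      (∀ lam mu : (Fin d → ℤ) → ℂ, MemMorrey00 d u p lam → MemMorrey00 d u p mu →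
        f (lam + mu) = f lam + f mu) →
      (∀ (c : ℂ) (lam : (Fin d → ℤ) → ℂ), MemMorrey00 d u p lam → f (c • lam) = c * f lam) →
      (∃ C : ℝ≥0∞, C ≠ ⊤ ∧ ∀ lam : (Fin d → ℤ) → ℂ, MemMorrey00 d u p lam →
        (‖f lam‖₊ : ℝ≥0∞) ≤ C * morreyNorm d u p lam) →
      Tendsto (fun n => f (w n)) atTop (nhds 0))
    (lam : (Fin d → ℤ) → ℂ) (hlam : MemMorrey00 d u p lam) :
    Filter.limsup (fun n => morreyNorm d u p (lam + w n)) atTop =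
      max (morreyNorm d u p lam) (Filter.limsup (fun n => morreyNorm d u p (w n)) atTop) :=
  morrey00_weak_null_limsup_general d u p hp hpu w hweak lam hlam
end
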